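/- arXiv:math/0306346 — 9 statements merged into one kernel-verified Lean document; each statement's English description precedes it below -/
import Mathlib

section
/- A finite group G is complemented if and only if there exist finitely many finite groups G_1, …, G_r, each of squarefree order, and an injective group homomorphism from G into the direct product G_1 × ⋯ × G_r. -/
/-- A group is complemented if every subgroup `H` has a complement `K`:
`H ∩ K = 1` and `HK = G`. -/
def IsComplementedGroup (G : Type*) [Group G] : Prop :=
  ∀ H : Subgroup G, ∃ K : Subgroup G, H ⊓ K = ⊥ ∧ ∀ g : G, ∃ h ∈ H, ∃ k ∈ K, g = h * k

universe u

open Pointwise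

namespace PHall

theorem isComplementedGroup_of_injective {G H : Type*} [Group G] [Group H] (f : G →* H)
    (hf : Function.Injective f) (h : IsComplementedGroup H) : IsComplementedGroup G := by
  intro A
  obtain ⟨K, hK1, hK2⟩ := h (A.map f)
  refine ⟨K.comap f, ?_, ?_⟩
  · ext x
    simp only [Subgroup.mem_inf, Subgroup.mem_bot, Subgroup.mem_comap]
    constructor
    · rintro ⟨hxA, hxK⟩
      have hx : f x ∈ A.map f ⊓ K := ⟨Subgroup.mem_map.mpr ⟨x, hxA, rfl⟩, hxK⟩
      rw [hK1, Subgroup.mem_bot] at hx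
      apply hf
      rw [hx, map_one]
    · rintro rfl
      exact ⟨A.one_mem, by simpa using (K.comap f).one_mem⟩
  · intro g
    obtain ⟨h', hh', k, hk, hfk⟩ := hK2 (f g)
    obtain ⟨a, ha, rfl⟩ := Subgroup.mem_map.mp hh'
    refine ⟨a, ha, a⁻¹ * g, ?_, by group⟩
    have : k = (f a)⁻¹ * f g := by rw [hfk]; group
    show f (a⁻¹ * g) ∈ K
    rw [map_mul, map_inv, ← this]
    exact hk

theorem isComplementedGroup_of_surjective {G H : Type*} [Group G] [Group H] (f : G →* H)
    (hf : Function.Surjective f) (h : IsComplementedGroup G) : IsComplementedGroup H := by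
  intro A
  obtain ⟨K, hK1, hK2⟩ := h (A.comap f)
  refine ⟨K.map f, ?_, ?_⟩
  · ext x
    simp only [Subgroup.mem_inf, Subgroup.mem_bot]
    constructor
    · rintro ⟨hxA, hxK⟩
      obtain ⟨k, hk, rfl⟩ := Subgroup.mem_map.mp hxK
      have : k ∈ A.comap f ⊓ K := ⟨hxA, hk⟩
      rw [hK1, Subgroup.mem_bot] at this
      rw [this, map_one]
    · rintro rfl
      exact ⟨A.one_mem, 1, K.one_mem, map_one f⟩
  · intro g
    obtain ⟨x, rfl⟩ := hf g
    obtain ⟨a, ha, k, hk, rfl⟩ := hK2 x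
    exact ⟨f a, ha, f k, Subgroup.mem_map.mpr ⟨k, hk, rfl⟩, map_mul f a k⟩

theorem isComplementedGroup_of_subsingleton {G : Type*} [Group G] [Subsingleton G] :
    IsComplementedGroup G := by
  intro A
  refine ⟨⊤, ?_, fun g => ⟨1, A.one_mem, g, Subgroup.mem_top g, (one_mul g).symm⟩⟩
  have : A = ⊥ := by
    ext x
    have hx : x = 1 := Subsingleton.elim x 1
    subst hx
    simp [A.one_mem]
  rw [this]
  simp

theorem card_eq_of_complement {G : Type*} [Group G] [Finite G] {H K : Subgroup G}
    (h1 : H ⊓ K = ⊥) (h2 : ∀ g : G, ∃ h ∈ H, ∃ k ∈ K, g = h * k) :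
    Nat.card G = Nat.card H * Nat.card K := by
  rw [← Nat.card_prod]
  apply Nat.card_congr
  refine Equiv.symm ?_
  refine Equiv.ofBijective (fun x : H × K => (x.1 : G) * (x.2 : G)) ⟨?_, ?_⟩
  · rintro ⟨h, k⟩ ⟨h', k'⟩ heq
    simp only at heq
    have hmem : ((h' : G)⁻¹ * h : G) ∈ H ⊓ K := by
      constructor
      · exact H.mul_mem (H.inv_mem h'.2) h.2
      · have : (h' : G)⁻¹ * (h : G) = (k' : G) * (k : G)⁻¹ := by
          calc (h' : G)⁻¹ * (h : G) = (h' : G)⁻¹ * ((h : G) * k) * (k : G)⁻¹ := by group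
          _ = (h' : G)⁻¹ * ((h' : G) * k') * (k : G)⁻¹ := by rw [heq]
          _ = (k' : G) * (k : G)⁻¹ := by group
        rw [this]
        exact K.mul_mem k'.2 (K.inv_mem k.2)
    rw [h1, Subgroup.mem_bot, inv_mul_eq_one] at hmem
    have hk : (k : G) = k' := by
      have h2 := heq
      rw [hmem] at h2
      exact mul_left_cancel h2
    exact Prod.ext (Subtype.ext hmem.symm) (Subtype.ext hk)
  · intro g
    obtain ⟨h, hh, k, hk, rfl⟩ := h2 g
    exact ⟨(⟨h, hh⟩, ⟨k, hk⟩), rfl⟩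


section Greedy

variable {G : Type*} [Group G]

theorem card_lt_of_lt [Finite G] {H K : Subgroup G} (h : H < K) :
    Nat.card H < Nat.card K := by
  have hs : (H : Set G) ⊂ (K : Set G) := by
    refine HasSubset.Subset.ssubset_of_ne (SetLike.coe_subset_coe.mpr h.le) ?_
    intro hc
    exact h.ne (SetLike.coe_injective hc)
  exact Set.Finite.card_lt_card (Set.toFinite _) hs

theorem greedy_aux [Finite G] (N : Subgroup G) {ι : Type*} [Fintype ι]
    (W : ι → Subgroup G) (hWn : ∀ i, (W i).Normal)
    (hWcard : ∀ i, Nat.card (W i) = 1 ∨ (Nat.card (W i)).Prime)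
    (hWle : ∀ i, W i ≤ N) (hsup : (⨆ i, W i) = N) :
    ∀ (m : ℕ) (A B : Subgroup G), A ≤ N → B.Normal → B ≤ N → A ⊓ B = ⊥ →
      Nat.card N - Nat.card (A ⊔ B : Subgroup G) ≤ m →
      ∃ B' : Subgroup G, B'.Normal ∧ B' ≤ N ∧ A ⊓ B' = ⊥ ∧ A ⊔ B' = N := by
  intro m
  induction m with
  | zero =>
    intro A B hA hBn hBle hdisj hm
    refine ⟨B, hBn, hBle, hdisj, ?_⟩
    exact Subgroup.eq_of_le_of_card_ge (sup_le hA hBle) (Nat.le_of_sub_eq_zero (Nat.le_zero.mp hm))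
  | succ m IH =>
    intro A B hA hBn hBle hdisj hm
    by_cases heq : A ⊔ B = N
    · exact ⟨B, hBn, hBle, hdisj, heq⟩
    · have hlt : A ⊔ B < N := lt_of_le_of_ne (sup_le hA hBle) heq
      have hex : ∃ i, ¬ W i ≤ A ⊔ B := by
        by_contra hcon
        push_neg at hcon
        exact heq (le_antisymm (sup_le hA hBle) (hsup ▸ iSup_le hcon))
      obtain ⟨i, hi⟩ := hex
      have hWprime : (Nat.card (W i)).Prime := by
        rcases hWcard i with h1 | h1
        · exact absurd ((Subgroup.card_eq_one.mp h1) ▸ bot_le) hi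
        · exact h1
      haveI := hBn
      haveI := hWn i
      have hWint : W i ⊓ (A ⊔ B) = ⊥ := by
        rcases hWprime.eq_one_or_self_of_dvd _ (Subgroup.card_dvd_of_le
          (inf_le_left : W i ⊓ (A ⊔ B) ≤ W i)) with h1 | h1
        · exact Subgroup.card_eq_one.mp h1
        · exfalso
          have : W i ⊓ (A ⊔ B) = W i :=
            Subgroup.eq_of_le_of_card_ge inf_le_left (ge_of_eq h1)
          exact hi (this ▸ (inf_le_right : W i ⊓ (A ⊔ B) ≤ A ⊔ B))
      have hdisj' : A ⊓ (B ⊔ W i) = ⊥ := by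
        rw [eq_bot_iff]
        rintro x ⟨hxA, hxBW⟩
        have hx' : (x : G) ∈ (B : Set G) * (W i : Set G) := by
          rw [← Subgroup.mul_normal B (W i)]
          exact hxBW
        obtain ⟨b, hb, w, hw, rfl⟩ := hx'
        have hwmem : w ∈ W i ⊓ (A ⊔ B) := by
          refine ⟨hw, ?_⟩
          have : w = b⁻¹ * (b * w) := by group
          rw [this]
          exact Subgroup.mul_mem _ (Subgroup.inv_mem _ ((le_sup_right : B ≤ A ⊔ B) hb))
            ((le_sup_left : A ≤ A ⊔ B) hxA)
        rw [hWint, Subgroup.mem_bot] at hwmem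
        subst hwmem
        have hbA : b ∈ A := by simpa using hxA
        have hbB : b ∈ A ⊓ B := ⟨hbA, hb⟩
        rw [hdisj] at hbB
        simpa using hbB
      have hcardlt : Nat.card (A ⊔ B : Subgroup G) < Nat.card (A ⊔ (B ⊔ W i) : Subgroup G) := by
        apply card_lt_of_lt
        rw [← sup_assoc]
        exact left_lt_sup.mpr hi
      have hm' : Nat.card N - Nat.card (A ⊔ (B ⊔ W i) : Subgroup G) ≤ m := by omega
      exact IH A (B ⊔ W i) hA inferInstance (sup_le hBle (hWle i)) hdisj' hm'

theorem greedy [Finite G] (N : Subgroup G) {ι : Type*} [Fintype ι]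
    (W : ι → Subgroup G) (hWn : ∀ i, (W i).Normal)
    (hWcard : ∀ i, Nat.card (W i) = 1 ∨ (Nat.card (W i)).Prime)
    (hWle : ∀ i, W i ≤ N) (hsup : (⨆ i, W i) = N) (A : Subgroup G) (hA : A ≤ N) :
    ∃ B' : Subgroup G, B'.Normal ∧ B' ≤ N ∧ A ⊓ B' = ⊥ ∧ A ⊔ B' = N := by
  refine greedy_aux N W hWn hWcard hWle hsup (Nat.card N) A ⊥ hA inferInstance bot_le
    (by simp) ?_
  exact Nat.sub_le _ _


end Greedy

theorem step_lemma {G : Type*} [Group G] [Finite G] (N : Subgroup G) [hN : N.Normal]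
    (hcop : (Nat.card N).Coprime N.index)
    (hstar : ∀ A : Subgroup G, A ≤ N →
      ∃ B : Subgroup G, B.Normal ∧ B ≤ N ∧ A ⊓ B = ⊥ ∧ A ⊔ B = N)
    (hq : IsComplementedGroup (G ⧸ N)) : IsComplementedGroup G := by
  intro H
  obtain ⟨Kbar, hK1, hK2⟩ := hq (H.map (QuotientGroup.mk' N))
  set K := Kbar.comap (QuotientGroup.mk' N) with hKdef
  have hNK : N ≤ K := by
    intro x hx
    show QuotientGroup.mk' N x ∈ Kbar
    have : QuotientGroup.mk' N x = 1 := (QuotientGroup.eq_one_iff x).mpr hx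
    rw [this]
    exact Kbar.one_mem
  have hHK : H ⊓ K = H ⊓ N := by
    ext x
    constructor
    · rintro ⟨hxH, hxK⟩
      refine ⟨hxH, ?_⟩
      have hmem : QuotientGroup.mk' N x ∈ H.map (QuotientGroup.mk' N) ⊓ Kbar :=
        ⟨Subgroup.mem_map.mpr ⟨x, hxH, rfl⟩, hxK⟩
      rw [hK1, Subgroup.mem_bot] at hmem
      exact (QuotientGroup.eq_one_iff x).mp hmem
    · rintro ⟨hxH, hxN⟩
      exact ⟨hxH, hNK hxN⟩
  obtain ⟨B, hBn, hBle, hABbot, hABsup⟩ := hstar (H ⊓ N) inf_le_right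
  haveI : (N.subgroupOf K).Normal := hN.subgroupOf K
  have hcard : Nat.card (N.subgroupOf K) = Nat.card N :=
    Nat.card_congr (Subgroup.subgroupOfEquivOfLe hNK).toEquiv
  have hidx : (N.subgroupOf K).index ∣ N.index := Subgroup.relIndex_dvd_index_of_normal N K
  have hcop' : (Nat.card (N.subgroupOf K)).Coprime (N.subgroupOf K).index := by
    rw [hcard]
    exact Nat.Coprime.coprime_dvd_right hidx hcop
  obtain ⟨Q, hQ⟩ := Subgroup.exists_right_complement'_of_coprime hcop'
  set Q' := Q.map K.subtype with hQ'def
  have hQ'le : Q' ≤ K := Subgroup.map_subtype_le Q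
  have hQ'N : ∀ x : G, x ∈ Q' → x ∈ N → x = 1 := by
    intro x hxQ hxN
    obtain ⟨y, hy, rfl⟩ := Subgroup.mem_map.mp hxQ
    have hyb : y ∈ N.subgroupOf K ⊓ Q := ⟨Subgroup.mem_subgroupOf.mpr hxN, hy⟩
    have hyB : y ∈ (⊥ : Subgroup K) := by
      have := hQ.disjoint
      rw [disjoint_iff] at this
      rw [← this]
      exact hyb
    rw [Subgroup.mem_bot] at hyB
    rw [hyB, map_one]
  haveI := hBn
  refine ⟨B ⊔ Q', ?_, ?_⟩
  · rw [eq_bot_iff]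
    rintro x ⟨hxH, hxBQ⟩
    have hx' : (x : G) ∈ (B : Set G) * (Q' : Set G) := by
      rw [← Subgroup.normal_mul B Q']
      exact hxBQ
    obtain ⟨b, hb, q, hq', rfl⟩ := hx'
    have hBQK : B ⊔ Q' ≤ K := sup_le (hBle.trans hNK) hQ'le
    have hxK : b * q ∈ K := hBQK hxBQ
    have hxA : b * q ∈ H ⊓ N := by
      rw [← hHK]
      exact ⟨hxH, hxK⟩
    have hqN : q ∈ N := by
      have hq2 : q = b⁻¹ * (b * q) := by group
      rw [hq2]
      exact N.mul_mem (N.inv_mem (hBle hb)) hxA.2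
    have hq1 : q = 1 := hQ'N q hq' hqN
    subst hq1
    rw [mul_one] at hxA
    have hbb : b ∈ (H ⊓ N) ⊓ B := ⟨hxA, hb⟩
    rw [hABbot] at hbb
    simpa using hbb
  · intro g
    obtain ⟨hbar, hh, kbar, hk, hgk⟩ := hK2 (QuotientGroup.mk' N g)
    obtain ⟨h, hH, rfl⟩ := Subgroup.mem_map.mp hh
    have hk' : h⁻¹ * g ∈ K := by
      show QuotientGroup.mk' N (h⁻¹ * g) ∈ Kbar
      have : QuotientGroup.mk' N (h⁻¹ * g) = kbar := by
        rw [map_mul, map_inv, hgk]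
        group
      rw [this]
      exact hk
    obtain ⟨⟨n, q⟩, hnq, -⟩ := hQ.existsUnique (⟨h⁻¹ * g, hk'⟩ : K)
    have hnN : ((n : K) : G) ∈ N := Subgroup.mem_subgroupOf.mp n.2
    have hqQ' : ((q : K) : G) ∈ Q' := Subgroup.mem_map.mpr ⟨(q : K), q.2, rfl⟩
    have hnab : ((n : K) : G) ∈ ((H ⊓ N : Subgroup G) : Set G) * (B : Set G) := by
      rw [← Subgroup.mul_normal (H ⊓ N) B, hABsup]
      exact hnN
    obtain ⟨a, ha, b, hb, hab⟩ := hnab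
    have hdec : h⁻¹ * g = ((n : K) : G) * ((q : K) : G) := by
      have := congrArg (fun z : K => (z : G)) hnq
      simpa using this.symm
    refine ⟨h * a, H.mul_mem hH ((inf_le_left : H ⊓ N ≤ H) ha), b * ((q : K) : G),
      Subgroup.mul_mem _ ((le_sup_left : B ≤ B ⊔ Q') hb) ((le_sup_right : Q' ≤ B ⊔ Q') hqQ'),
      ?_⟩
    have hg : g = h * (((n : K) : G) * ((q : K) : G)) := by
      rw [← hdec]
      group
    rw [hg, ← hab]
    group


theorem conj_pow_aux {G : Type*} [Group G] (g s : G) (n : ℕ) :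
    (g * s * g⁻¹) ^ n = g * s ^ n * g⁻¹ := by
  induction n with
  | zero => simp
  | succ k ih =>
    rw [pow_succ, pow_succ, ih]
    group

theorem sylow_card_squarefree {G : Type*} [Group G] [Finite G] {q : ℕ} [hq : Fact q.Prime]
    (hsq : Squarefree (Nat.card G)) (hdvd : q ∣ Nat.card G) (P : Sylow q G) :
    Nat.card P = q := by
  rw [Sylow.card_eq_multiplicity]
  have h1 : (Nat.card G).factorization q ≤ 1 := hsq.natFactorization_le_one q
  have h2 : 0 < (Nat.card G).factorization q :=
    hq.out.factorization_pos_of_dvd Nat.card_pos.ne' hdvd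
  have h3 : (Nat.card G).factorization q = 1 := le_antisymm h1 h2
  rw [h3, pow_one]

theorem normalizer_le_centralizer {G : Type*} [Group G] [Finite G] {q : ℕ} [hq : Fact q.Prime]
    (hmin : ∀ r, r.Prime → r ∣ Nat.card G → q ≤ r) (P : Sylow q G)
    (hcard : Nat.card (P : Subgroup G) = q) :
    Subgroup.normalizer (P : Set G) ≤ Subgroup.centralizer (P : Set G) := by
  set K := Subgroup.normalizer (P : Set G) with hKdef
  haveI : ((P : Subgroup G).subgroupOf K).Normal := Subgroup.normal_in_normalizer
  set P' := (P : Subgroup G).subgroupOf K with hP'def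
  have hcard' : Nat.card P' = q := by
    rw [← hcard]
    exact Nat.card_congr (Subgroup.subgroupOfEquivOfLe Subgroup.le_normalizer).toEquiv
  haveI : IsCyclic P' := isCyclic_of_prime_card hcard'
  have hAut : Nat.card (MulAut P') = q - 1 := by
    rw [IsCyclic.card_mulAut, hcard', Nat.totient_prime hq.out]
  intro g hg
  rw [Subgroup.mem_centralizer_iff]
  intro h hh
  have hhP : h ∈ (P : Subgroup G) := hh
  set k : K := ⟨g, hg⟩ with hkdef
  set σ : MulAut P' := MulAut.conjNormal k with hσdef
  have hσ : σ = 1 := by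
    have hd1 : orderOf σ ∣ q - 1 := hAut ▸ orderOf_dvd_natCard σ
    have hd2 : orderOf σ ∣ Nat.card G := by
      refine dvd_trans (orderOf_map_dvd MulAut.conjNormal k) ?_
      exact dvd_trans (orderOf_dvd_natCard k) (Subgroup.card_subgroup_dvd_card K)
    by_contra hne
    set r := (orderOf σ).minFac with hrdef
    have hord1 : orderOf σ ≠ 1 := fun hcon => hne (orderOf_eq_one_iff.mp hcon)
    have hr : r.Prime := Nat.minFac_prime hord1
    have hrdvd : r ∣ q - 1 := dvd_trans (Nat.minFac_dvd _) hd1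
    have hrG : r ∣ Nat.card G := dvd_trans (Nat.minFac_dvd _) hd2
    have h1 := hmin r hr hrG
    have h2 : r ≤ q - 1 := Nat.le_of_dvd (by have := hq.out.two_le; omega) hrdvd
    have hq2 : 2 ≤ q := hq.out.two_le
    have h3 : q ≤ q - 1 := h1.trans h2
    omega
  have hhK : h ∈ K := Subgroup.le_normalizer hhP
  have hhP' : (⟨h, hhK⟩ : K) ∈ P' := Subgroup.mem_subgroupOf.mpr hhP
  have h3 := MulAut.conjNormal_apply (G := K) k (⟨⟨h, hhK⟩, hhP'⟩ : P')
  rw [← hσdef, hσ] at h3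
  have h4 : (⟨h, hhK⟩ : K) = k * ⟨h, hhK⟩ * k⁻¹ := h3
  have h5 : h = g * h * g⁻¹ := congrArg Subtype.val h4
  calc h * g = (g * h * g⁻¹) * g := by rw [← h5]
  _ = g * h := by group

theorem isSolvable_pi : ∀ (r : ℕ) (Gs : Fin r → Type u) [∀ i, Group (Gs i)]
    [∀ i, Group.IsSolvable (Gs i)], Group.IsSolvable (∀ i, Gs i) := by
  intro r
  induction r with
  | zero =>
    intro Gs _ _
    infer_instance
  | succ r IHr =>
    intro Gs instG instS
    haveI : Group.IsSolvable (∀ i : Fin r, Gs i.succ) := IHr _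
    set f : (∀ i : Fin r, Gs i.succ) →* (∀ i : Fin (r + 1), Gs i) :=
      { toFun := fun x => Fin.cases 1 (fun j => x j) ,
        map_one' := by
          funext i
          refine Fin.cases ?_ ?_ i <;> simp
        map_mul' := by
          intro x y
          funext i
          refine Fin.cases ?_ ?_ i <;> simp } with hfdef
    set g : (∀ i : Fin (r + 1), Gs i) →* Gs 0 := Pi.evalMonoidHom Gs 0 with hgdef
    refine solvable_of_ker_le_range f g ?_
    intro x hx
    have hx0 : x 0 = 1 := hx
    refine ⟨fun j => x j.succ, ?_⟩
    funext i
    refine Fin.cases ?_ ?_ i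
    · simpa [hfdef] using hx0.symm
    · intro j
      simp [hfdef]

theorem isSolvable_of_squarefree : ∀ (n : ℕ) (G : Type u) [Group G] [Finite G],
    Nat.card G ≤ n → Squarefree (Nat.card G) → Group.IsSolvable G := by
  intro n
  induction n using Nat.strong_induction_on with
  | _ n IH =>
    intro G _ _ hle hsq
    by_cases h1 : Nat.card G = 1
    · haveI : Subsingleton G := (Nat.card_eq_one_iff_unique.mp h1).1
      infer_instance
    · set q := (Nat.card G).minFac with hqdef
      have hq : q.Prime := Nat.minFac_prime h1
      haveI : Fact q.Prime := ⟨hq⟩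
      have hmin : ∀ r, r.Prime → r ∣ Nat.card G → q ≤ r := fun r hr hrd =>
        Nat.minFac_le_of_dvd hr.two_le hrd
      obtain ⟨P⟩ : Nonempty (Sylow q G) := inferInstance
      have hPcard : Nat.card (P : Subgroup G) = q :=
        sylow_card_squarefree hsq (Nat.minFac_dvd _) P
      have hP := normalizer_le_centralizer hmin P hPcard
      set M := (MonoidHom.transferSylow P hP).ker with hMdef
      have hcompl := MonoidHom.ker_transferSylow_isComplement' P hP
      have hMcard : Nat.card M * q = Nat.card G := by
        rw [← hPcard]
        exact hcompl.card_mul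
      have hMpos : 0 < Nat.card M := Nat.card_pos
      have hMlt : Nat.card M < Nat.card G := by
        calc Nat.card M < Nat.card M * 2 := by omega
        _ ≤ Nat.card M * q := Nat.mul_le_mul_left _ hq.two_le
        _ = Nat.card G := hMcard
      have hMsq : Squarefree (Nat.card M) := hsq.squarefree_of_dvd ⟨q, hMcard.symm⟩
      haveI : Group.IsSolvable M := IH (Nat.card M) (lt_of_lt_of_le hMlt hle) M le_rfl hMsq
      have hQcard : Nat.card (G ⧸ M) = q := by
        rw [← Subgroup.index_eq_card]
        have h2 := hcompl.symm.index_eq_card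
        rw [h2, hPcard]
      haveI : IsCyclic (G ⧸ M) := isCyclic_of_prime_card hQcard
      haveI : Group.IsSolvable (G ⧸ M) := by
        apply isSolvable_of_comm
        obtain ⟨z, hz⟩ := IsCyclic.exists_generator (α := G ⧸ M)
        intro a b
        obtain ⟨ma, rfl⟩ := hz a
        obtain ⟨mb, rfl⟩ := hz b
        rw [← zpow_add, ← zpow_add, add_comm]
      refine solvable_of_ker_le_range M.subtype (QuotientGroup.mk' M) ?_
      rw [QuotientGroup.ker_mk', Subgroup.range_subtype]

theorem top_sylow_normal : ∀ (n : ℕ) (G : Type u) [Group G] [Finite G],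
    Nat.card G ≤ n → Squarefree (Nat.card G) → ∀ p : ℕ, p.Prime →
    (∀ r, r.Prime → r ∣ Nat.card G → r ≤ p) →
    ∃ S : Subgroup G, S.Normal ∧ (∀ x ∈ S, x ^ p = 1) ∧ ¬ (p ∣ S.index) ∧
      (Nat.card S = 1 ∨ Nat.card S = p) := by
  intro n
  induction n using Nat.strong_induction_on with
  | _ n IH =>
    intro G _ _ hle hsq p hp hmax
    by_cases hdvd : p ∣ Nat.card G
    swap
    · refine ⟨⊥, inferInstance, ?_, ?_, Or.inl Subgroup.card_bot⟩
      · intro x hx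
        rw [Subgroup.mem_bot] at hx
        rw [hx, one_pow]
      · rwa [Subgroup.index_bot]
    · have hcard1 : Nat.card G ≠ 1 := by
        intro h
        rw [h, Nat.dvd_one] at hdvd
        exact hp.one_lt.ne' hdvd
      set q := (Nat.card G).minFac with hqdef
      have hq : q.Prime := Nat.minFac_prime hcard1
      haveI : Fact q.Prime := ⟨hq⟩
      have hmin : ∀ r, r.Prime → r ∣ Nat.card G → q ≤ r := fun r hr hrd =>
        Nat.minFac_le_of_dvd hr.two_le hrd
      by_cases hqp : q = p
      · have hallp : Nat.card G = p := by
          have h1 : (Nat.card G).primeFactors = {p} := by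
            apply Finset.eq_singleton_iff_unique_mem.mpr
            constructor
            · exact Nat.mem_primeFactors.mpr ⟨hp, hdvd, Nat.card_pos.ne'⟩
            · intro r hr
              have hrp := Nat.prime_of_mem_primeFactors hr
              have hrd := Nat.dvd_of_mem_primeFactors hr
              have hu := hmax r hrp hrd
              have hl := hmin r hrp hrd
              omega
          have h2 := Nat.prod_primeFactors_of_squarefree hsq
          rw [h1] at h2
          simpa using h2.symm
        refine ⟨⊤, inferInstance, ?_, ?_, Or.inr ?_⟩
        · intro x _
          rw [← hallp]
          exact pow_card_eq_one'
        · rw [Subgroup.index_top, Nat.dvd_one]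
          exact hp.one_lt.ne'
        · rw [← hallp]
          exact Subgroup.card_top
      · have hqlt : q < p := lt_of_le_of_ne (hmax q hq (Nat.minFac_dvd _)) hqp
        obtain ⟨P⟩ : Nonempty (Sylow q G) := inferInstance
        have hPcard : Nat.card (P : Subgroup G) = q :=
          sylow_card_squarefree hsq (Nat.minFac_dvd _) P
        have hP := normalizer_le_centralizer hmin P hPcard
        set M := (MonoidHom.transferSylow P hP).ker with hMdef
        have hcompl := MonoidHom.ker_transferSylow_isComplement' P hP
        have hMcard : Nat.card M * q = Nat.card G := by
          rw [← hPcard]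
          exact hcompl.card_mul
        have hMpos : 0 < Nat.card M := Nat.card_pos
        have hMlt : Nat.card M < Nat.card G := by
          calc Nat.card M < Nat.card M * 2 := by omega
          _ ≤ Nat.card M * q := Nat.mul_le_mul_left _ hq.two_le
          _ = Nat.card G := hMcard
        have hMsq : Squarefree (Nat.card M) := hsq.squarefree_of_dvd ⟨q, hMcard.symm⟩
        have hMmax : ∀ r, r.Prime → r ∣ Nat.card M → r ≤ p := fun r hr hrd =>
          hmax r hr (hrd.trans ⟨q, hMcard.symm⟩)
        obtain ⟨S0, hS0n, hS0pow, hS0idx, hS0card⟩ :=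
          IH (Nat.card M) (lt_of_lt_of_le hMlt hle) M le_rfl hMsq p hp hMmax
        set S := S0.map M.subtype with hSdef
        have hSM : S ≤ M := Subgroup.map_subtype_le S0
        haveI := hS0n
        have hmemS : ∀ x : G, x ∈ S ↔ (x ∈ M ∧ x ^ p = 1) := by
          intro x
          constructor
          · rintro ⟨y, hy, rfl⟩
            refine ⟨y.2, ?_⟩
            have h5 := hS0pow y hy
            calc (M.subtype y) ^ p = M.subtype (y ^ p) := by rw [map_pow]
            _ = 1 := by rw [h5, map_one]
          · rintro ⟨hxM, hxp⟩
            refine Subgroup.mem_map.mpr ⟨⟨x, hxM⟩, ?_, rfl⟩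
            set y : M := (⟨x, hxM⟩ : M) with hydef
            have hyp : y ^ p = 1 := Subtype.ext (by simpa using hxp)
            have hmk : (QuotientGroup.mk' S0) y ^ p = 1 := by rw [← map_pow, hyp, map_one]
            have hord : orderOf ((QuotientGroup.mk' S0) y) ∣ p := orderOf_dvd_of_pow_eq_one hmk
            rcases hp.eq_one_or_self_of_dvd _ hord with h1 | h1
            · have h2 : (QuotientGroup.mk' S0) y = 1 := orderOf_eq_one_iff.mp h1
              exact (QuotientGroup.eq_one_iff y).mp h2
            · exfalso
              apply hS0idx
              rw [← h1]
              have h3 : orderOf ((QuotientGroup.mk' S0) y) ∣ Nat.card (M ⧸ S0) :=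
                orderOf_dvd_natCard _
              rwa [← Subgroup.index_eq_card] at h3
        have hSnormal : S.Normal := by
          constructor
          intro s hs g
          rw [hmemS] at hs ⊢
          refine ⟨(inferInstance : M.Normal).conj_mem s hs.1 g, ?_⟩
          rw [conj_pow_aux, hs.2]
          group
        have hScard : Nat.card S = Nat.card S0 :=
          (Nat.card_congr (Subgroup.equivMapOfInjective S0 M.subtype
            M.subtype_injective).toEquiv).symm
        have hSidx : ¬ p ∣ S.index := by
          have hrel : S.relIndex M * M.index = S.index := Subgroup.relIndex_mul_index hSM
          have hMidx : M.index = q := by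
            rw [hcompl.symm.index_eq_card, hPcard]
          have hrelval : S.relIndex M = S0.index := by
            have h6 : S.subgroupOf M = S0 :=
              Subgroup.comap_map_eq_self_of_injective M.subtype_injective S0
            rw [show S.relIndex M = (S.subgroupOf M).index from rfl, h6]
          rw [← hrel, hrelval, hMidx]
          intro hcon
          rcases (Nat.Prime.dvd_mul hp).mp hcon with h | h
          · exact hS0idx h
          · rw [Nat.prime_dvd_prime_iff_eq hp hq] at h
            omega
        exact ⟨S, hSnormal, fun x hx => ((hmemS x).mp hx).2, hSidx, hScard ▸ hS0card⟩


theorem main_bwd : ∀ (n : ℕ) (r : ℕ) (Gs : Fin r → Type) [∀ i, Group (Gs i)]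
    [∀ i, Finite (Gs i)], (∀ i, Squarefree (Nat.card (Gs i))) →
    Nat.card (∀ i, Gs i) ≤ n → IsComplementedGroup (∀ i, Gs i) := by
  intro n
  induction n using Nat.strong_induction_on with
  | _ n IH =>
    intro r Gs instG instF hsq hle
    by_cases h1 : Nat.card (∀ i, Gs i) = 1
    · haveI : Subsingleton (∀ i, Gs i) := (Nat.card_eq_one_iff_unique.mp h1).1
      exact isComplementedGroup_of_subsingleton
    · have hcardpos : 0 < Nat.card (∀ i, Gs i) := Nat.card_pos
      have hne : (Nat.card (∀ i, Gs i)).primeFactors.Nonempty := by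
        rw [Nat.nonempty_primeFactors]
        omega
      set p := (Nat.card (∀ i, Gs i)).primeFactors.max' hne with hpdef
      have hpmem := (Nat.card (∀ i, Gs i)).primeFactors.max'_mem hne
      have hp : p.Prime := Nat.prime_of_mem_primeFactors hpmem
      have hpdvd : p ∣ Nat.card (∀ i, Gs i) := Nat.dvd_of_mem_primeFactors hpmem
      have hcards : Nat.card (∀ i, Gs i) = ∏ i, Nat.card (Gs i) := Nat.card_pi
      have hmax : ∀ i, ∀ s, s.Prime → s ∣ Nat.card (Gs i) → s ≤ p := by
        intro i s hs hsd
        apply Finset.le_max'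
        apply Nat.mem_primeFactors.mpr
        refine ⟨hs, ?_, hcardpos.ne'⟩
        rw [hcards]
        exact hsd.trans (Finset.dvd_prod_of_mem _ (Finset.mem_univ i))
      have hT := fun i => top_sylow_normal (Nat.card (Gs i)) (Gs i) le_rfl (hsq i) p hp (hmax i)
      choose S hSn hSpow hSidx hScard using hT
      haveI : ∀ i, (S i).Normal := hSn
      set Φ : (∀ i, Gs i) →* (∀ i, Gs i ⧸ S i) :=
        { toFun := fun x i => QuotientGroup.mk (x i),
          map_one' := rfl, map_mul' := fun x y => rfl } with hΦdef
      have hkerΦ : ∀ x, x ∈ Φ.ker ↔ ∀ i, x i ∈ S i := by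
        intro x
        rw [MonoidHom.mem_ker]
        constructor
        · intro h i
          have h2 := congrFun h i
          exact (QuotientGroup.eq_one_iff _).mp h2
        · intro h
          funext i
          exact (QuotientGroup.eq_one_iff _).mpr (h i)
      set N := Φ.ker with hNdef
      set W : Fin r → Subgroup (∀ i, Gs i) :=
        fun i => (S i).map (MonoidHom.mulSingle Gs i) with hWdef
      have hmemW : ∀ i (x : ∀ j, Gs j), x ∈ W i ↔ (x i ∈ S i ∧ ∀ j, j ≠ i → x j = 1) := by
        intro i x
        constructor
        · rintro ⟨y, hy, rfl⟩
          refine ⟨by simpa using hy, fun j hj => ?_⟩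
          simp [MonoidHom.mulSingle_apply, Pi.mulSingle_eq_of_ne hj]
        · rintro ⟨h1, h2⟩
          refine Subgroup.mem_map.mpr ⟨x i, h1, funext fun j => ?_⟩
          by_cases hj : j = i
          · subst hj
            simp
          · simp [MonoidHom.mulSingle_apply, Pi.mulSingle_eq_of_ne hj, h2 j hj]
      have hWn : ∀ i, (W i).Normal := by
        intro i
        constructor
        intro w hw g
        rw [hmemW] at hw ⊢
        constructor
        · have : (g * w * g⁻¹) i = g i * w i * (g i)⁻¹ := rfl
          rw [this]
          exact (hSn i).conj_mem _ hw.1 (g i)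
        · intro j hj
          have : (g * w * g⁻¹) j = g j * w j * (g j)⁻¹ := rfl
          rw [this, hw.2 j hj]
          group
      have hWcard : ∀ i, Nat.card (W i) = Nat.card (S i) := fun i =>
        (Nat.card_congr (Subgroup.equivMapOfInjective (S i) _
          (Pi.mulSingle_injective (M := Gs) i)).toEquiv).symm
      have hWle : ∀ i, W i ≤ N := by
        intro i x hx
        rw [hmemW] at hx
        have : x ∈ Φ.ker := by
          rw [hkerΦ]
          intro j
          by_cases hj : j = i
          · subst hj
            exact hx.1
          · rw [hx.2 j hj]
            exact (S j).one_mem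
        exact this
      have hsupW : (⨆ i, W i) = N := by
        apply le_antisymm
        · exact iSup_le hWle
        · intro x hx
          have hx' : ∀ i, x i ∈ S i := (hkerΦ x).mp hx
          have key : ∀ s : Finset (Fin r), ∀ y : (∀ i, Gs i), (∀ i, y i ∈ S i) →
              (∀ i, i ∉ s → y i = 1) → y ∈ ⨆ i, W i := by
            intro s
            induction s using Finset.induction_on with
            | empty =>
              intro y hy hy2
              have : y = 1 := funext fun i => hy2 i (Finset.notMem_empty i)
              rw [this]
              exact Subgroup.one_mem _
            | @insert a s ha IH2 =>
              intro y hy hy2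
              have hdecomp : y = MonoidHom.mulSingle Gs a (y a) * Function.update y a 1 := by
                funext j
                by_cases hja : j = a
                · subst hja
                  simp
                · have : (MonoidHom.mulSingle Gs a (y a) * Function.update y a 1) j =
                      (MonoidHom.mulSingle Gs a (y a)) j * Function.update y a 1 j := rfl
                  rw [this, Function.update_of_ne hja]
                  simp [MonoidHom.mulSingle_apply, Pi.mulSingle_eq_of_ne hja]
              rw [hdecomp]
              apply Subgroup.mul_mem
              · exact Subgroup.mem_iSup_of_mem a (Subgroup.mem_map.mpr ⟨y a, hy a, rfl⟩)
              · apply IH2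
                · intro i
                  by_cases hia : i = a
                  · subst hia
                    rw [Function.update_self]
                    exact (S _).one_mem
                  · rw [Function.update_of_ne hia]
                    exact hy i
                · intro i hi
                  by_cases hia : i = a
                  · subst hia
                    simp
                  · rw [Function.update_of_ne hia]
                    exact hy2 i (fun hmem => hi ((Finset.mem_insert.mp hmem).resolve_left hia))
          exact key Finset.univ x hx' (fun i hi => absurd (Finset.mem_univ i) hi)
      have hcardSpow : ∀ i, Nat.card (S i) ∣ p := by
        intro i
        rcases hScard i with h | h
        · rw [h]
          exact one_dvd p
        · rw [h]
      have hNeq : N = Subgroup.pi Set.univ S := by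
        ext x
        rw [hkerΦ x, Subgroup.mem_pi]
        exact ⟨fun h i _ => h i, fun h i => h i (Set.mem_univ i)⟩
      have hcardN : Nat.card N = ∏ i, Nat.card (S i) := by
        rw [hNeq, ← Nat.card_pi]
        apply Nat.card_congr
        exact { toFun := fun x i => ⟨x.1 i, (Subgroup.mem_pi _ |>.mp x.2) i (Set.mem_univ i)⟩,
                invFun := fun x => ⟨fun i => (x i).1, (Subgroup.mem_pi _).mpr fun i _ => (x i).2⟩,
                left_inv := fun x => Subtype.ext rfl,
                right_inv := fun x => funext fun i => Subtype.ext rfl }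
      have hidxN : N.index = ∏ i, (S i).index := by
        have h7 : Nat.card N * N.index = Nat.card (∀ i, Gs i) := N.card_mul_index
        have h8 : Nat.card N * ∏ i, (S i).index = Nat.card (∀ i, Gs i) := by
          rw [hcardN, hcards, ← Finset.prod_mul_distrib]
          exact Finset.prod_congr rfl fun i _ => (S i).card_mul_index
        have hNpos : 0 < Nat.card N := Nat.card_pos
        exact Nat.eq_of_mul_eq_mul_left hNpos (h7.trans h8.symm)
      have hpidx : ¬ p ∣ N.index := by
        rw [hidxN]
        intro hcon
        have hcp : p.Coprime (∏ i, (S i).index) := Nat.Coprime.prod_right fun i _ =>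
          (Nat.Prime.coprime_iff_not_dvd hp).mpr (hSidx i)
        exact hp.one_lt.ne' (hcp.eq_one_of_dvd hcon)
      have hcop : (Nat.card N).Coprime N.index := by
        have hdvdpow : Nat.card N ∣ p ^ r := by
          rw [hcardN]
          calc ∏ i, Nat.card (S i) ∣ ∏ _i : Fin r, p :=
            Finset.prod_dvd_prod_of_dvd _ _ (fun i _ => hcardSpow i)
          _ = p ^ r := by rw [Finset.prod_const, Finset.card_univ, Fintype.card_fin]
        refine Nat.Coprime.coprime_dvd_left hdvdpow ?_
        exact Nat.Coprime.pow_left r ((Nat.Prime.coprime_iff_not_dvd hp).mpr hpidx)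
      have hidxlt : N.index < Nat.card (∀ i, Gs i) := by
        have h7 : Nat.card N * N.index = Nat.card (∀ i, Gs i) := N.card_mul_index
        have h9 : 0 < N.index := by
          rcases Nat.eq_zero_or_pos N.index with h | h
          · rw [h, mul_zero] at h7
            omega
          · exact h
        have hN2 : 2 ≤ Nat.card N := by
          have hNpos : 0 < Nat.card N := Nat.card_pos
          rcases Nat.lt_or_ge (Nat.card N) 2 with h | h
          · exfalso
            have hcN1 : Nat.card N = 1 := by omega
            obtain ⟨i0, hi0⟩ : ∃ i, p ∣ Nat.card (Gs i) := by
              by_contra hcon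
              push_neg at hcon
              have hcp : p.Coprime (∏ i, Nat.card (Gs i)) := Nat.Coprime.prod_right fun i _ =>
                (Nat.Prime.coprime_iff_not_dvd hp).mpr (hcon i)
              rw [← hcards] at hcp
              exact hp.one_lt.ne' (hcp.eq_one_of_dvd hpdvd)
            have hSi0 : Nat.card (S i0) = p := by
              rcases hScard i0 with h | h
              · exfalso
                have hbot : S i0 = ⊥ := Subgroup.card_eq_one.mp h
                apply hSidx i0
                rw [hbot, Subgroup.index_bot]
                exact hi0
              · exact h
            have hdd : Nat.card (S i0) ∣ Nat.card N := by
              rw [hcardN]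
              exact Finset.dvd_prod_of_mem _ (Finset.mem_univ i0)
            rw [hcN1, Nat.dvd_one, hSi0] at hdd
            exact hp.one_lt.ne' hdd
          · exact h
        calc N.index < 2 * N.index := by omega
        _ ≤ Nat.card N * N.index := Nat.mul_le_mul_right _ hN2
        _ = _ := h7
      have hΦsurj : Function.Surjective Φ := by
        intro y
        have h10 : ∀ i, ∃ g, QuotientGroup.mk' (S i) g = y i :=
          fun i => QuotientGroup.mk'_surjective (S i) (y i)
        choose g hg using h10
        exact ⟨g, funext hg⟩
      have hcardquot : Nat.card (∀ i, Gs i ⧸ S i) = N.index := by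
        have h11 : Φ.range = ⊤ := MonoidHom.range_eq_top.mpr hΦsurj
        rw [hNdef, Subgroup.index_ker Φ, h11]
        exact (Subgroup.card_top).symm
      haveI : ∀ i, Finite (Gs i ⧸ S i) := fun i => Quotient.finite _
      have hsq' : ∀ i, Squarefree (Nat.card (Gs i ⧸ S i)) := by
        intro i
        refine (hsq i).squarefree_of_dvd ?_
        exact Subgroup.card_quotient_dvd_card (S i)
      have hquot : IsComplementedGroup (∀ i, Gs i ⧸ S i) := by
        apply IH N.index (lt_of_lt_of_le hidxlt hle) r _ hsq'
        rw [hcardquot]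
      have hquotN : IsComplementedGroup ((∀ i, Gs i) ⧸ N) :=
        isComplementedGroup_of_injective (QuotientGroup.kerLift Φ)
          (QuotientGroup.kerLift_injective Φ) hquot
      refine step_lemma N hcop (fun A hA => ?_) hquotN
      refine greedy N W hWn (fun i => ?_) hWle hsupW A hA
      rw [hWcard i]
      rcases hScard i with h | h
      · exact Or.inl h
      · exact Or.inr (h ▸ hp)


theorem squarefree_of_cyclic_complemented {G : Type*} [Group G] [Finite G] [IsCyclic G]
    (hc : IsComplementedGroup G) : Squarefree (Nat.card G) := by
  by_contra hcon
  obtain ⟨r, hr, hr2⟩ : ∃ r, r.Prime ∧ r * r ∣ Nat.card G := by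
    rw [Nat.squarefree_iff_prime_squarefree] at hcon
    push_neg at hcon
    exact hcon
  haveI : Fact r.Prime := ⟨hr⟩
  have hrdvd : r ∣ Nat.card G := dvd_trans (dvd_mul_right r r) hr2
  obtain ⟨x, hx⟩ := exists_prime_orderOf_dvd_card' r hrdvd
  obtain ⟨K, hK1, hK2⟩ := hc (Subgroup.zpowers x)
  have hcard : Nat.card G = r * Nat.card K := by
    rw [card_eq_of_complement hK1 hK2, Nat.card_zpowers, hx]
  have hrK : r ∣ Nat.card K := by
    have h3 := hr2
    rw [hcard] at h3
    exact (mul_dvd_mul_iff_left hr.pos.ne').mp h3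
  obtain ⟨y0, hy0⟩ := exists_prime_orderOf_dvd_card' (G := K) r hrK
  have hyord : orderOf ((y0 : G)) = r := by
    rw [← hy0]
    exact orderOf_injective K.subtype K.subtype_injective y0
  have hyx : (y0 : G) ∈ Subgroup.zpowers x := by
    classical
    letI := Fintype.ofFinite G
    have hb := IsCyclic.card_pow_eq_one_le (α := G) (n := r) hr.pos
    have hyr : (y0 : G) ^ r = 1 := by
      rw [← hyord]
      exact pow_orderOf_eq_one _
    have hsub : (Subgroup.zpowers x : Set G).toFinset ⊆
        Finset.univ.filter (fun a : G => a ^ r = 1) := by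
      intro z hz
      rw [Set.mem_toFinset] at hz
      obtain ⟨k, rfl⟩ := Subgroup.mem_zpowers_iff.mp hz
      rw [Finset.mem_filter]
      refine ⟨Finset.mem_univ _, ?_⟩
      have : (x ^ k) ^ (r : ℤ) = ((x ^ (r : ℕ)) ^ k : G) := by
        rw [← zpow_natCast, ← zpow_mul, ← zpow_mul, mul_comm]
      rw [← zpow_natCast, this]
      rw [← hx, pow_orderOf_eq_one, one_zpow]
    have hcards : (Subgroup.zpowers x : Set G).toFinset.card = r := by
      have h1 : (Subgroup.zpowers x : Set G).toFinset.card = Nat.card (Subgroup.zpowers x) := by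
        rw [Set.toFinset_card, ← Nat.card_eq_fintype_card]
        rfl
      rw [h1, Nat.card_zpowers, hx]
    have heq : (Subgroup.zpowers x : Set G).toFinset =
        Finset.univ.filter (fun a : G => a ^ r = 1) :=
      Finset.eq_of_subset_of_card_le hsub (by rw [hcards]; exact hb)
    have hyF : (y0 : G) ∈ Finset.univ.filter (fun a : G => a ^ r = 1) :=
      Finset.mem_filter.mpr ⟨Finset.mem_univ _, hyr⟩
    rw [← heq, Set.mem_toFinset] at hyF
    exact hyF
  have hy1 : (y0 : G) ∈ Subgroup.zpowers x ⊓ K := ⟨hyx, y0.2⟩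
  rw [hK1, Subgroup.mem_bot] at hy1
  rw [hy1, orderOf_one] at hyord
  exact hr.one_lt.ne' hyord.symm

theorem normal_of_index_min_prime {G : Type*} [Group G] [Finite G] {q : ℕ} (hq : q.Prime)
    (hmin : ∀ r, r.Prime → r ∣ Nat.card G → q ≤ r) (K : Subgroup G) (hidx : K.index = q) :
    K.Normal := by
  classical
  set φ := MulAction.toPermHom G (G ⧸ K) with hφ
  have hker : φ.ker ≤ K := by
    intro g hg
    have h0 : φ g = 1 := hg
    have h1 : (QuotientGroup.mk g : G ⧸ K) = QuotientGroup.mk 1 := by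
      have h2 : (φ g) (QuotientGroup.mk 1) = QuotientGroup.mk 1 := by rw [h0]; rfl
      calc (QuotientGroup.mk g : G ⧸ K) = (φ g) (QuotientGroup.mk 1) := by
            show _ = g • (QuotientGroup.mk (1 : G) : G ⧸ K)
            rw [MulAction.Quotient.smul_mk]
            simp
      _ = _ := h2
    have h2 := QuotientGroup.eq.mp h1
    simpa using h2
  have hrel : φ.ker.relIndex K * K.index = φ.ker.index := Subgroup.relIndex_mul_index hker
  have hkerindex : φ.ker.index ∣ Nat.card (Equiv.Perm (G ⧸ K)) := by
    rw [Subgroup.index_ker]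
    exact Subgroup.card_subgroup_dvd_card φ.range
  have hcardQ : Nat.card (G ⧸ K) = q := by rw [← Subgroup.index_eq_card, hidx]
  letI := Fintype.ofFinite (G ⧸ K)
  have hperm : Nat.card (Equiv.Perm (G ⧸ K)) = q.factorial := by
    rw [Nat.card_eq_fintype_card, Fintype.card_perm, ← Nat.card_eq_fintype_card, hcardQ]
  rw [hperm, ← hrel, hidx] at hkerindex
  have hq1 : q = (q - 1) + 1 := by have := hq.two_le; omega
  have hfac : q.factorial = q * (q - 1).factorial := by
    conv_lhs => rw [hq1]
    rw [Nat.factorial_succ, ← hq1]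
  have hmdvd : φ.ker.relIndex K ∣ (q - 1).factorial := by
    have h2 : q * φ.ker.relIndex K ∣ q * (q - 1).factorial := by
      rw [← hfac, mul_comm q _]
      exact hkerindex
    exact (mul_dvd_mul_iff_left hq.pos.ne').mp h2
  have hm1 : φ.ker.relIndex K = 1 := by
    by_contra hne
    have hs : (φ.ker.relIndex K).minFac.Prime := Nat.minFac_prime hne
    have hsd : (φ.ker.relIndex K).minFac ∣ (q - 1).factorial :=
      (Nat.minFac_dvd _).trans hmdvd
    have hslt : (φ.ker.relIndex K).minFac ≤ q - 1 := (Nat.Prime.dvd_factorial hs).mp hsd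
    have hsG : (φ.ker.relIndex K).minFac ∣ Nat.card G := by
      have hmK : φ.ker.relIndex K ∣ Nat.card K :=
        Subgroup.index_dvd_card (G := K) (H := φ.ker.subgroupOf K)
      exact ((Nat.minFac_dvd _).trans hmK).trans (Subgroup.card_subgroup_dvd_card K)
    have h3 := hmin _ hs hsG
    have hq2 := hq.two_le
    omega
  have hksub : K ≤ φ.ker := by
    have h3 : (φ.ker.subgroupOf K) = ⊤ := Subgroup.index_eq_one.mp hm1
    intro x hx
    have h4 : (⟨x, hx⟩ : K) ∈ φ.ker.subgroupOf K := h3 ▸ Subgroup.mem_top _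
    exact Subgroup.mem_subgroupOf.mp h4
  have hKeq : K = φ.ker := le_antisymm hksub hker
  rw [hKeq]
  infer_instance


/-- The target property, with an arbitrary finite index type. -/
def EmbedsSF (G : Type*) [Group G] : Prop :=
  ∃ (ι : Type) (_ : Fintype ι) (Gs : ι → Type) (_ : ∀ i, Group (Gs i)) (_ : ∀ i, Finite (Gs i)),
    (∀ i, Squarefree (Nat.card (Gs i))) ∧ ∃ f : G →* (∀ i, Gs i), Function.Injective f

theorem embedsSF_of_injective {G H : Type*} [Group G] [Group H] (f : G →* H)
    (hf : Function.Injective f) (h : EmbedsSF H) : EmbedsSF G := by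
  obtain ⟨ι, i1, Gs, i2, i3, hsq, g, hg⟩ := h
  exact ⟨ι, i1, Gs, i2, i3, hsq, g.comp f, hg.comp hf⟩

theorem embedsSF_prod {A B : Type*} [Group A] [Group B] (hA : EmbedsSF A) (hB : EmbedsSF B) :
    EmbedsSF (A × B) := by
  obtain ⟨ι1, i1f, Gs1, i1g, i1fin, hsq1, f1, hf1⟩ := hA
  obtain ⟨ι2, i2f, Gs2, i2g, i2fin, hsq2, f2, hf2⟩ := hB
  refine ⟨ι1 ⊕ ι2, inferInstance, Sum.elim Gs1 Gs2,
    (fun i => match i with | .inl a => i1g a | .inr b => i2g b),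
    (fun i => match i with | .inl a => i1fin a | .inr b => i2fin b),
    (fun i => match i with | .inl a => hsq1 a | .inr b => hsq2 b), ?_⟩
  letI : ∀ i : ι1 ⊕ ι2, Group (Sum.elim Gs1 Gs2 i) :=
    fun i => match i with | .inl a => i1g a | .inr b => i2g b
  set φ : ((∀ i, Gs1 i) × (∀ i, Gs2 i)) →* (∀ i : ι1 ⊕ ι2, Sum.elim Gs1 Gs2 i) :=
    { toFun := fun p i => match i with | .inl a => p.1 a | .inr b => p.2 b,
      map_one' := by funext i; cases i <;> rfl,
      map_mul' := fun p q => by funext i; cases i <;> rfl } with hφ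
  have hφinj : Function.Injective φ := by
    intro p q h
    have h1 : p.1 = q.1 := funext fun a => congrFun h (.inl a)
    have h2 : p.2 = q.2 := funext fun b => congrFun h (.inr b)
    exact Prod.ext h1 h2
  have hpm : Function.Injective (MonoidHom.prodMap f1 f2) := by
    intro p q h
    rw [Prod.ext_iff] at h
    exact Prod.ext (hf1 h.1) (hf2 h.2)
  exact ⟨φ.comp (MonoidHom.prodMap f1 f2), hφinj.comp hpm⟩

theorem shrink (G : Type*) [Group G] [Finite G] :
    ∃ (H : Type) (_ : Group H) (_ : Finite H) (f : G →* H),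
      Function.Injective f ∧ Nat.card H = Nat.card G := by
  obtain ⟨n, ⟨e⟩⟩ := Finite.exists_equiv_fin G
  letI : Group (Fin n) := Equiv.group e.symm
  refine ⟨Fin n, inferInstance, inferInstance,
    { toFun := e, map_one' := ?_, map_mul' := ?_ }, e.injective, Nat.card_congr e.symm⟩
  · rfl
  · intro a b
    show e (a * b) = e (e.symm (e a) * e.symm (e b))
    rw [Equiv.symm_apply_apply, Equiv.symm_apply_apply]

theorem embedsSF_of_squarefree {G : Type*} [Group G] [Finite G]
    (h : Squarefree (Nat.card G)) : EmbedsSF G := by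
  obtain ⟨H, hg, hfin, f, hf, hcard⟩ := shrink G
  refine ⟨PUnit, inferInstance, fun _ => H, fun _ => hg, fun _ => hfin,
    fun _ => hcard.symm ▸ h,
    { toFun := fun g _ => f g, map_one' := funext fun _ => map_one f,
      map_mul' := fun a b => funext fun _ => map_mul f a b },
    fun a b hab => hf (congrFun hab PUnit.unit)⟩

noncomputable def mulAutMultAddAut (A : Type*) [AddGroup A] :
    MulAut (Multiplicative A) ≃* Multiplicative (AddAut A) :=
  MulAutMultiplicative A

theorem main_fwd : ∀ (n : ℕ) (G : Type u) [Group G] [Finite G], Nat.card G ≤ n →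
    IsComplementedGroup G → EmbedsSF G := by
  intro n
  induction n using Nat.strong_induction_on with
  | _ n IH =>
    intro G instG instF hle hc
    by_cases hA : ∃ N M : Subgroup G, N.Normal ∧ M.Normal ∧ N ≠ ⊥ ∧ M ≠ ⊥ ∧ N ⊓ M = ⊥
    · obtain ⟨N, M, hNn, hMn, hNb, hMb, hNM⟩ := hA
      haveI := hNn; haveI := hMn
      set f : G →* (G ⧸ N) × (G ⧸ M) := (QuotientGroup.mk' N).prod (QuotientGroup.mk' M) with hf
      have hfinj : Function.Injective f := by
        rw [← MonoidHom.ker_eq_bot_iff, hf, MonoidHom.ker_prod,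
          QuotientGroup.ker_mk', QuotientGroup.ker_mk']
        exact hNM
      have quotlt : ∀ (L : Subgroup G), L ≠ ⊥ → Nat.card (G ⧸ L) < Nat.card G := by
        intro L hLb
        have h7 : Nat.card L * L.index = Nat.card G := L.card_mul_index
        have hL2 : 1 < Nat.card L := (Subgroup.one_lt_card_iff_ne_bot L).mpr hLb
        have hpos : 0 < L.index := by
          rcases Nat.eq_zero_or_pos L.index with h | h
          · rw [h, mul_zero] at h7
            have := Nat.card_pos (α := G)
            omega
          · exact h
        rw [← Subgroup.index_eq_card]
        calc L.index < 2 * L.index := by omega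
        _ ≤ Nat.card L * L.index := Nat.mul_le_mul_right _ hL2
        _ = Nat.card G := h7
      have e1 : EmbedsSF (G ⧸ N) := IH _ (lt_of_lt_of_le (quotlt N hNb) hle) (G ⧸ N) le_rfl
        (isComplementedGroup_of_surjective _ (QuotientGroup.mk'_surjective N) hc)
      have e2 : EmbedsSF (G ⧸ M) := IH _ (lt_of_lt_of_le (quotlt M hMb) hle) (G ⧸ M) le_rfl
        (isComplementedGroup_of_surjective _ (QuotientGroup.mk'_surjective M) hc)
      exact embedsSF_of_injective f hfinj (embedsSF_prod e1 e2)
    · push_neg at hA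
      by_cases hG1 : Nat.card G = 1
      · exact embedsSF_of_squarefree (by rw [hG1]; exact squarefree_one)
      haveI : Nontrivial G := by
        by_contra hcon
        rw [not_nontrivial_iff_subsingleton] at hcon
        exact hG1 (Nat.card_eq_one_iff_unique.mpr ⟨hcon, ⟨1⟩⟩)
      obtain ⟨x1, hx1⟩ := exists_ne (1 : G)
      have hSne : {M : Subgroup G | M.Normal ∧ M ≠ ⊥}.Nonempty := by
        refine ⟨⊤, inferInstance, fun h => hx1 ?_⟩
        have : x1 ∈ (⊤ : Subgroup G) := Subgroup.mem_top x1
        rw [h, Subgroup.mem_bot] at this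
        exact this
      obtain ⟨N, hNmem, hNmin⟩ : ∃ N ∈ {M : Subgroup G | M.Normal ∧ M ≠ ⊥},
          ∀ M ∈ {M : Subgroup G | M.Normal ∧ M ≠ ⊥}, Nat.card M ≤ Nat.card N →
            Nat.card N = Nat.card M := by
        obtain ⟨N, h1, h2⟩ := Set.Finite.exists_minimalFor
          (fun M : Subgroup G => Nat.card M) _ (Set.toFinite _) hSne
        exact ⟨N, h1, fun M hM hle => le_antisymm (h2 hM hle) hle⟩
      obtain ⟨hNn, hNb⟩ := hNmem
      haveI := hNn
      have hmin' : ∀ M : Subgroup G, M.Normal → M ≠ ⊥ → M ≤ N → M = N := by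
        intro M hMn hMb hle'
        have hcardle : Nat.card M ≤ Nat.card N := Subgroup.card_le_of_le hle'
        have h0 := hNmin M ⟨hMn, hMb⟩ hcardle
        exact Subgroup.eq_of_le_of_card_ge hle' (le_of_eq h0)
      have hq_of_card : ∀ m : ℕ, Nat.card G = m → Squarefree m → EmbedsSF G := by
        intro m hm hsf
        exact embedsSF_of_squarefree (hm ▸ hsf)
      by_cases hNtop : N = ⊤
      · -- G has no proper nontrivial normal subgroup
        have hnonorm : ∀ M : Subgroup G, M.Normal → M ≠ ⊥ → M = ⊤ := by
          intro M hMn hMb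
          have h1 : Nat.card M ≤ Nat.card N := by
            rw [hNtop]
            exact Subgroup.card_le_of_le le_top
          have h2 := hNmin M ⟨hMn, hMb⟩ h1
          apply Subgroup.eq_of_le_of_card_ge le_top
          rw [hNtop] at h2
          rw [Subgroup.card_top] at h2 ⊢
          exact le_of_eq h2
        set q := (Nat.card G).minFac with hqdef
        have hq : q.Prime := Nat.minFac_prime hG1
        haveI : Fact q.Prime := ⟨hq⟩
        have hqmin : ∀ r, r.Prime → r ∣ Nat.card G → q ≤ r := fun r hr hrd =>
          Nat.minFac_le_of_dvd hr.two_le hrd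
        obtain ⟨x, hx⟩ := exists_prime_orderOf_dvd_card' q (Nat.minFac_dvd _)
        have hxne : x ≠ 1 := by
          intro h
          rw [h, orderOf_one] at hx
          exact hq.one_lt.ne' hx.symm
        obtain ⟨K, hK1, hK2⟩ := hc (Subgroup.zpowers x)
        have hcardG : Nat.card G = q * Nat.card K := by
          rw [card_eq_of_complement hK1 hK2, Nat.card_zpowers, hx]
        have hKidx : K.index = q := by
          have h7 := K.card_mul_index
          rw [hcardG] at h7
          have hKpos : 0 < Nat.card K := Nat.card_pos
          exact Nat.eq_of_mul_eq_mul_left hKpos (h7.trans (mul_comm q (Nat.card K)))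
        have hKn : K.Normal := normal_of_index_min_prime hq hqmin K hKidx
        have hKbot : K = ⊥ := by
          by_contra hne
          have := hnonorm K hKn hne
          rw [this, Subgroup.index_top] at hKidx
          exact hq.one_lt.ne' hKidx.symm
        refine hq_of_card q ?_ hq.prime.squarefree
        rw [hcardG, hKbot, Subgroup.card_bot, mul_one]
      · -- N is a proper minimal normal subgroup
        have hNlt : Nat.card N < Nat.card G := by
          have h7 : Nat.card N * N.index = Nat.card G := N.card_mul_index
          have hip : N.index ≠ 1 := fun h => hNtop (Subgroup.index_eq_one.mp h)
          have hipos : 0 < N.index := by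
            rcases Nat.eq_zero_or_pos N.index with h | h
            · rw [h, mul_zero] at h7
              have := Nat.card_pos (α := G)
              omega
            · exact h
          have h2i : 2 ≤ N.index := by omega
          calc Nat.card N < Nat.card N * 2 := by
                have := Nat.card_pos (α := N)
                omega
          _ ≤ Nat.card N * N.index := Nat.mul_le_mul_left _ h2i
          _ = Nat.card G := h7
        have hNc : IsComplementedGroup N :=
          isComplementedGroup_of_injective N.subtype N.subtype_injective hc
        have hNemb : EmbedsSF ↥N := IH (Nat.card N) (lt_of_lt_of_le hNlt hle) ↥N le_rfl hNc
        have hNsolv : Group.IsSolvable ↥N := by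
          obtain ⟨ι, if1, Gs, ig, ifin, hsq, fN, hfN⟩ := hNemb
          letI := if1; letI := ig; letI := ifin
          haveI : ∀ i, Group.IsSolvable (Gs i) := fun i =>
            isSolvable_of_squarefree (Nat.card (Gs i)) (Gs i) le_rfl (hsq i)
          obtain ⟨k, ⟨e⟩⟩ := Finite.exists_equiv_fin ι
          haveI : Group.IsSolvable (∀ j : Fin k, Gs (e.symm j)) := isSolvable_pi k _
          set ψ : (∀ i : ι, Gs i) →* (∀ j : Fin k, Gs (e.symm j)) :=
            { toFun := fun x j => x (e.symm j), map_one' := rfl,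
              map_mul' := fun _ _ => rfl } with hψdef
          have hψ : Function.Injective ψ := (Equiv.piCongrLeft' Gs e).injective
          exact solvable_of_solvable_injective
            (show Function.Injective ⇑(ψ.comp fN) from hψ.comp hfN)
        have hNab : ∀ x ∈ N, ∀ y ∈ N, x * y = y * x := by
          have hcomm : ⁅N, N⁆ = ⊥ := by
            by_contra hne
            have h1 : ⁅N, N⁆ ≤ N := Subgroup.commutator_le_left N N
            have h2 : ⁅N, N⁆ = N := hmin' _ inferInstance hne h1
            have h3 : (⊤ : Subgroup ↥N).map N.subtype = N := by
              rw [← MonoidHom.range_eq_map, Subgroup.range_subtype]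
            have h4 : (⁅(⊤ : Subgroup ↥N), (⊤ : Subgroup ↥N)⁆).map N.subtype = ⁅N, N⁆ := by
              rw [Subgroup.map_commutator, h3]
            have h5 : (⁅(⊤ : Subgroup ↥N), (⊤ : Subgroup ↥N)⁆ : Subgroup ↥N) = ⊤ := by
              apply Subgroup.map_injective N.subtype_injective
              rw [h4, h3, h2]
            obtain ⟨k, hk⟩ := hNsolv.solvable
            have hup : ∀ m, derivedSeries ↥N m = ⊤ := by
              intro m
              induction m with
              | zero => rfl
              | succ m ih => rw [derivedSeries_succ, ih, h5]
            rw [hup k] at hk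
            have hcard1 : Nat.card ↥N = 1 := by
              have h6 : Nat.card (⊤ : Subgroup ↥N) = Nat.card (⊥ : Subgroup ↥N) := by rw [hk]
              rw [Subgroup.card_top, Subgroup.card_bot] at h6
              exact h6
            exact hNb (Subgroup.card_eq_one.mp hcard1)
          have h6 := Subgroup.commutator_eq_bot_iff_le_centralizer.mp hcomm
          intro x hx y hy
          have h7 := h6 hx
          rw [Subgroup.mem_centralizer_iff] at h7
          exact (h7 y hy).symm
        have hNcardne1 : Nat.card N ≠ 1 := fun h => hNb (Subgroup.card_eq_one.mp h)
        set p := (Nat.card N).minFac with hpdef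
        have hp : p.Prime := Nat.minFac_prime hNcardne1
        haveI : Fact p.Prime := ⟨hp⟩
        obtain ⟨x0, hx0⟩ := exists_prime_orderOf_dvd_card' (G := ↥N) p (Nat.minFac_dvd _)
        have hxN : (x0 : G) ∈ N := x0.2
        have hxord : orderOf (x0 : G) = p := by
          rw [← hx0]
          exact orderOf_injective N.subtype N.subtype_injective x0
        have hxne : (x0 : G) ≠ 1 := by
          intro h
          rw [h, orderOf_one] at hxord
          exact hp.one_lt.ne' hxord.symm
        obtain ⟨K, hK1, hK2⟩ := hc (Subgroup.zpowers (x0 : G))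
        have hcardG : Nat.card G = p * Nat.card K := by
          rw [card_eq_of_complement hK1 hK2, Nat.card_zpowers, hxord]
        have hKidx : K.index = p := by
          have h7 := K.card_mul_index
          rw [hcardG] at h7
          have hKpos : 0 < Nat.card K := Nat.card_pos
          exact Nat.eq_of_mul_eq_mul_left hKpos (h7.trans (mul_comm p (Nat.card K)))
        have hxnK : (x0 : G) ∉ K := by
          intro h
          have h8 : (x0 : G) ∈ Subgroup.zpowers (x0 : G) ⊓ K := ⟨Subgroup.mem_zpowers _, h⟩
          rw [hK1, Subgroup.mem_bot] at h8
          exact hxne h8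
        have hsupKN : K ⊔ N = ⊤ := by
          have hKle : K ≤ K ⊔ N := le_sup_left
          have hKne : K ⊔ N ≠ K := by
            intro h
            exact hxnK (h ▸ ((le_sup_right : N ≤ K ⊔ N) hxN))
          have h8 : K.relIndex (K ⊔ N) * (K ⊔ N).index = K.index :=
            Subgroup.relIndex_mul_index hKle
          rw [hKidx] at h8
          have hdvd : (K ⊔ N).index ∣ p := ⟨K.relIndex (K ⊔ N), by rw [mul_comm]; exact h8.symm⟩
          rcases hp.eq_one_or_self_of_dvd _ hdvd with h9 | h9
          · exact Subgroup.index_eq_one.mp h9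
          · exfalso
            rw [h9] at h8
            have h10 : K.relIndex (K ⊔ N) = 1 := by
              have hppos := hp.pos
              have := Nat.eq_of_mul_eq_mul_right hppos (h8.trans (one_mul p).symm)
              exact this
            have h11 : K.subgroupOf (K ⊔ N) = ⊤ := Subgroup.index_eq_one.mp h10
            apply hKne
            apply le_antisymm _ hKle
            intro z hz
            have h12 : (⟨z, hz⟩ : (K ⊔ N : Subgroup G)) ∈ K.subgroupOf (K ⊔ N) :=
              h11 ▸ Subgroup.mem_top _
            exact Subgroup.mem_subgroupOf.mp h12
        have hdecompG : ∀ g : G, ∃ k ∈ K, ∃ nn ∈ N, g = k * nn := by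
          intro g
          have h13 : g ∈ (K : Set G) * (N : Set G) := by
            rw [← Subgroup.mul_normal K N, hsupKN]
            trivial
          obtain ⟨k, hk, nn, hnn, heq⟩ := h13
          exact ⟨k, hk, nn, hnn, heq.symm⟩
        have hAnorm : (K ⊓ N).Normal := by
          constructor
          intro a ha g
          obtain ⟨k, hk, nn, hnn, rfl⟩ := hdecompG g
          have h9 : nn * a * nn⁻¹ = a := by
            have h99 := hNab nn hnn a ha.2
            rw [h99]
            group
          have h10 : (k * nn) * a * (k * nn)⁻¹ = k * (nn * a * nn⁻¹) * k⁻¹ := by group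
          rw [h10, h9]
          exact ⟨K.mul_mem (K.mul_mem hk ha.1) (K.inv_mem hk), hNn.conj_mem a ha.2 k⟩
        have hKNbot : K ⊓ N = ⊥ := by
          by_contra hne
          have h12 : K ⊓ N = N := hmin' _ hAnorm hne inf_le_right
          apply hxnK
          have h13 : (x0 : G) ∈ K ⊓ N := by rw [h12]; exact hxN
          exact h13.1
        have hNcardp : Nat.card N = p := by
          have h13 : Nat.card G = Nat.card K * Nat.card N :=
            card_eq_of_complement hKNbot (fun g => hdecompG g)
          have hKpos : 0 < Nat.card K := Nat.card_pos
          have h14 : Nat.card K * Nat.card N = Nat.card K * p := by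
            rw [← h13, hcardG, mul_comm]
          exact Nat.eq_of_mul_eq_mul_left hKpos h14
        set C := Subgroup.centralizer (N : Set G) with hCdef
        have hNleC : N ≤ C := by
          intro nn hnn
          rw [Subgroup.mem_centralizer_iff]
          intro y hy
          exact hNab y hy nn hnn
        have hCnorm : C.Normal := by
          constructor
          intro c hc' g
          rw [hCdef, Subgroup.mem_centralizer_iff] at hc' ⊢
          intro h hh
          have hconj : g⁻¹ * h * g ∈ N := by
            have h15 := hNn.conj_mem h hh g⁻¹
            simpa using h15
          have h16 := hc' _ hconj
          calc h * (g * c * g⁻¹) = g * ((g⁻¹ * h * g) * c) * g⁻¹ := by group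
          _ = g * (c * (g⁻¹ * h * g)) * g⁻¹ := by rw [h16]
          _ = (g * c * g⁻¹) * h := by group
        have hCKnorm : (C ⊓ K).Normal := by
          constructor
          intro a ha g
          obtain ⟨k, hk, nn, hnn, rfl⟩ := hdecompG g
          have h9 : nn * a * nn⁻¹ = a := by
            have h99 := Subgroup.mem_centralizer_iff.mp ha.1 nn hnn
            rw [h99]
            group
          have h10 : (k * nn) * a * (k * nn)⁻¹ = k * (nn * a * nn⁻¹) * k⁻¹ := by group
          rw [h10, h9]
          exact ⟨hCnorm.conj_mem a ha.1 k, K.mul_mem (K.mul_mem hk ha.2) (K.inv_mem hk)⟩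
        have hCKbot : C ⊓ K = ⊥ := by
          by_contra hne
          have h14 : N ⊓ (C ⊓ K) = ⊥ := by
            rw [eq_bot_iff]
            rintro z ⟨hzN, hzC, hzK⟩
            have : z ∈ K ⊓ N := ⟨hzK, hzN⟩
            rw [hKNbot] at this
            exact this
          exact (hA N (C ⊓ K) hNn hCKnorm hNb hne) h14
        have hCN : C = N := by
          apply le_antisymm _ hNleC
          intro c hc'
          obtain ⟨k, hk, nn, hnn, heq⟩ := hdecompG c
          have hkC : k ∈ C := by
            have h15 : k = c * nn⁻¹ := by rw [heq]; group
            rw [h15]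
            exact C.mul_mem hc' (C.inv_mem (hNleC hnn))
          have h16 : k ∈ C ⊓ K := ⟨hkC, hk⟩
          rw [hCKbot, Subgroup.mem_bot] at h16
          rw [heq, h16, one_mul]
          exact hnn
        set ρ : G →* MulAut ↥N := MulAut.conjNormal with hρ
        have hkerρ : ρ.ker = C := by
          ext g
          rw [MonoidHom.mem_ker, hCdef, Subgroup.mem_centralizer_iff]
          constructor
          · intro h y hy
            have h15 := congrArg (fun σ : MulAut ↥N => ((σ ⟨y, hy⟩ : ↥N) : G)) h
            rw [hρ, MulAut.conjNormal_apply] at h15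
            have h15' : g * y * g⁻¹ = y := h15
            calc y * g = (g * y * g⁻¹) * g := by rw [h15']
            _ = g * y := by group
          · intro h
            have : ∀ y : ↥N, (ρ g) y = y := by
              intro y
              have h16 := h (y : G) y.2
              apply Subtype.ext
              show ((MulAut.conjNormal g) y : G) = (y : G)
              rw [MulAut.conjNormal_apply]
              calc g * (y : G) * g⁻¹ = ((y : G) * g) * g⁻¹ := by rw [h16]
              _ = y := by group
            exact MulEquiv.ext this
        haveI : IsCyclic ↥N := isCyclic_of_prime_card hNcardp
        haveI : Fact (Nat.card ↥N).Prime := by rw [hNcardp]; exact ⟨hp⟩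
        haveI : NeZero (Nat.card ↥N) := ⟨Nat.card_pos.ne'⟩
        set E : MulAut ↥N ≃* (ZMod (Nat.card ↥N))ˣ :=
          ((MulAut.congr (zmodCyclicMulEquiv (inferInstance : IsCyclic ↥N)).symm).trans
            (mulAutMultAddAut (ZMod (Nat.card ↥N)))).trans
            (ZMod.AddAutEquivUnits (Nat.card ↥N)).toMultiplicative with hE
        haveI : IsCyclic (MulAut ↥N) := isCyclic_of_surjective E.symm E.symm.surjective
        have hAutcard : Nat.card (MulAut ↥N) = p - 1 := by
          rw [IsCyclic.card_mulAut, hNcardp, Nat.totient_prime hp]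
        haveI : Finite (MulAut ↥N) := Finite.of_equiv _ E.symm.toEquiv
        have hQc : IsComplementedGroup (G ⧸ ρ.ker) :=
          isComplementedGroup_of_surjective _ (QuotientGroup.mk'_surjective _) hc
        haveI : IsCyclic (G ⧸ ρ.ker) := by
          haveI : IsCyclic (QuotientGroup.kerLift ρ).range := Subgroup.isCyclic _
          exact isCyclic_of_surjective
            (MonoidHom.ofInjective (QuotientGroup.kerLift_injective ρ)).symm
            (MulEquiv.surjective _)
        have hQcard_dvd : Nat.card (G ⧸ ρ.ker) ∣ p - 1 := by
          rw [← hAutcard]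
          have h17 : Nat.card (G ⧸ ρ.ker) = Nat.card (QuotientGroup.kerLift ρ).range :=
            Nat.card_congr (MonoidHom.ofInjective (QuotientGroup.kerLift_injective ρ)).toEquiv
          rw [h17]
          exact Subgroup.card_subgroup_dvd_card _
        have hQsf : Squarefree (Nat.card (G ⧸ ρ.ker)) := squarefree_of_cyclic_complemented hQc
        have hpnotdvd : ¬ p ∣ Nat.card (G ⧸ ρ.ker) := by
          intro hcon
          have h18 : p ∣ p - 1 := hcon.trans hQcard_dvd
          have hp2 := hp.two_le
          have h19 := Nat.le_of_dvd (by omega) h18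
          omega
        have hGcard : Nat.card G = p * Nat.card (G ⧸ ρ.ker) := by
          have h19 : Nat.card ρ.ker * ρ.ker.index = Nat.card G := ρ.ker.card_mul_index
          have h20 : Nat.card ρ.ker = p := by
            rw [hkerρ, hCN]
            exact hNcardp
          rw [← h19, h20, Subgroup.index_eq_card]
        refine hq_of_card _ hGcard ?_
        refine (Nat.squarefree_mul ?_).mpr ⟨hp.prime.squarefree, hQsf⟩
        exact (Nat.Prime.coprime_iff_not_dvd hp).mpr hpnotdvd


end PHall

/-- (P. Hall) A finite group is complemented if and only if it embeds in a finite direct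
product of groups of squarefree order. -/
theorem complemented_iff_embeds_in_product_of_squarefree_order
    (G : Type*) [Group G] [Finite G] :
    IsComplementedGroup G ↔
      ∃ (r : ℕ) (Gs : Fin r → Type) (inst : ∀ i, Group (Gs i)) (_ : ∀ i, Finite (Gs i)),
        haveI := inst
        (∀ i, Squarefree (Nat.card (Gs i))) ∧
          ∃ f : G →* (∀ i, Gs i), Function.Injective f := by
  constructor
  · intro hc
    obtain ⟨ι, i1, Gs, i2, i3, hsq, f, hf⟩ := PHall.main_fwd (Nat.card G) G le_rfl hc
    letI := i1; letI := i2; letI := i3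
    obtain ⟨r, ⟨e⟩⟩ := Finite.exists_equiv_fin ι
    refine ⟨r, fun j => Gs (e.symm j), fun j => i2 (e.symm j), fun j => i3 (e.symm j),
      fun j => hsq (e.symm j), ?_⟩
    set ψ : (∀ i : ι, Gs i) →* (∀ j : Fin r, Gs (e.symm j)) :=
      { toFun := fun x j => x (e.symm j), map_one' := rfl,
        map_mul' := fun _ _ => rfl } with hψdef
    have hψ : Function.Injective ψ := (Equiv.piCongrLeft' Gs e).injective
    exact ⟨ψ.comp f, hψ.comp hf⟩
  · rintro ⟨r, Gs, inst, fin, hsq, f, hf⟩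
    letI := inst; letI := fin
    have hP : IsComplementedGroup (∀ i, Gs i) :=
      PHall.main_bwd (Nat.card (∀ i, Gs i)) r Gs hsq le_rfl
    exact PHall.isComplementedGroup_of_injective f hf hP
end

section
/- Let G be a finite solvable group, H a proper subgroup of G, and N an abelian normal subgroup of G with NH = G. Then H is a maximal subgroup of G if and only if there is no normal subgroup K of G with N ∩ H < K < N (i.e., if and only if N/(N ∩ H) is a chief factor of G; note N ∩ H is automatically normal in G under these hypotheses). -/
/-!
Both directions rest on Dedekind's modular law `(X ⊔ Y) ⊓ Z = X ⊔ (Y ⊓ Z)` for `X ≤ Z`,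
valid when `X ⊔ Y` is the set product `X * Y` (e.g. when `X` or `Y` is normal). If `H` is
maximal and `N ⊓ H < K < N` with `K` normal, then `K ⊔ H = ⊤` and the law gives
`N = K ⊔ (H ⊓ N) = K`.
Conversely, for `H < M` the subgroup `N ⊓ M` is normal (it is normalized by `M`, and centralized
by the abelian `N`), so it is `N ⊓ H` or `N`; the law gives `M = H ⊔ (N ⊓ M)`, i.e. `M = H` or
`M ⊇ N ⊔ H = ⊤`.
-/

namespace Subgroup

open scoped Pointwise

variable {G : Type*} [Group G]

theorem sup_inf_assoc_of_coe_sup_eq_mul {X Y Z : Subgroup G}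
    (hXY : ((X ⊔ Y : Subgroup G) : Set G) = (X : Set G) * Y) (hXZ : X ≤ Z) :
    (X ⊔ Y) ⊓ Z = X ⊔ Y ⊓ Z := by
  refine le_antisymm (fun g ⟨hgXY, hgZ⟩ => ?_)
    (sup_le (le_inf le_sup_left hXZ) (inf_le_inf_right Z le_sup_right))
  obtain ⟨x, hx, y, hy, rfl⟩ : g ∈ (X : Set G) * Y := hXY ▸ hgXY
  have hyZ : y ∈ Z := by simpa using Z.mul_mem (Z.inv_mem (hXZ hx)) hgZ
  exact mul_mem_sup hx ⟨hy, hyZ⟩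

theorem sup_eq_top_of_forall_exists_mul {N H : Subgroup G}
    (hNH : ∀ g : G, ∃ n ∈ N, ∃ h ∈ H, g = n * h) : N ⊔ H = ⊤ :=
  eq_top_iff.mpr fun g _ => by
    obtain ⟨n, hn, h, hh, rfl⟩ := hNH g
    exact mul_mem_sup hn hh

theorem normal_inf_of_sup_eq_top {N M : Subgroup G} (hN : N.Normal)
    (hab : ∀ a b : G, a ∈ N → b ∈ N → a * b = b * a) (hNM : N ⊔ M = ⊤) :
    (N ⊓ M).Normal := by
  rw [← normalizer_eq_top_iff, eq_top_iff, ← hNM]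
  refine sup_le ?_ ?_
  · calc N ≤ centralizer (N : Set G) :=
          fun a ha => mem_centralizer_iff.mpr fun b hb => hab b a hb ha
      _ ≤ centralizer ((N ⊓ M : Subgroup G) : Set G) := centralizer_le inf_le_left
      _ ≤ normalizer ((N ⊓ M : Subgroup G) : Set G) := centralizer_le_normalizer _
  · calc M ≤ normalizer (N : Set G) ⊓ normalizer (M : Set G) :=
          le_inf (le_top.trans_eq (normalizer_eq_top_iff.mpr hN).symm) le_normalizer
      _ ≤ normalizer ((N ⊓ M : Subgroup G) : Set G) := inf_normalizer_le_normalizer_inf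

end Subgroup

open Subgroup in
theorem maximal_iff_chief_factor_over_inf_general
    (G : Type*) [Group G]
    (H N : Subgroup G) (hH : H ≠ ⊤) (hN : N.Normal)
    (hab : ∀ a b : G, a ∈ N → b ∈ N → a * b = b * a)
    (hNH : ∀ g : G, ∃ n ∈ N, ∃ h ∈ H, g = n * h) :
    IsCoatom H ↔ ¬∃ K : Subgroup G, K.Normal ∧ N ⊓ H < K ∧ K < N := by
  have hsup : N ⊔ H = ⊤ := sup_eq_top_of_forall_exists_mul hNH
  constructor
  · rintro hmax ⟨K, hK, hlt, hKN⟩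
    have hKH : K ⊔ H = ⊤ := hmax.lt_iff.mp <|
      right_lt_sup.mpr fun hKH => hlt.not_ge (le_inf hKN.le hKH)
    refine hKN.not_ge ?_
    calc N = (K ⊔ H) ⊓ N := by rw [hKH, top_inf_eq]
      _ = K ⊔ H ⊓ N := sup_inf_assoc_of_coe_sup_eq_mul (normal_mul K H) hKN.le
      _ ≤ K := sup_le le_rfl (inf_comm H N ▸ hlt.le)
  · intro hchief
    refine ⟨hH, fun M hHM => ?_⟩
    by_cases hNleM : N ≤ M
    · exact top_le_iff.mp (hsup ▸ sup_le hNleM hHM.le)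
    have hNM : (N ⊓ M).Normal :=
      normal_inf_of_sup_eq_top hN hab (top_le_iff.mp (hsup ▸ sup_le_sup_left hHM.le N))
    have heq : N ⊓ M = N ⊓ H := by
      by_contra hne
      exact hchief ⟨N ⊓ M, hNM, lt_of_le_of_ne (inf_le_inf_left N hHM.le) (Ne.symm hne),
        lt_of_le_of_ne inf_le_left fun h => hNleM (h ▸ inf_le_right)⟩
    refine absurd ?_ hHM.not_ge
    calc M = (H ⊔ N) ⊓ M := by rw [sup_comm, hsup, top_inf_eq]
      _ = H ⊔ N ⊓ M := sup_inf_assoc_of_coe_sup_eq_mul (mul_normal H N) hHM.le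
      _ ≤ H := sup_le le_rfl (heq ▸ inf_le_right)

/-- Let `G` be a finite solvable group, `H` a proper subgroup, and `N` an abelian normal
subgroup with `NH = G`. Then `H` is maximal in `G` if and only if `N/(N ∩ H)` is a chief
factor of `G`, i.e. there is no normal subgroup of `G` strictly between `N ⊓ H` and `N`. -/
theorem maximal_iff_chief_factor_over_inf
    (G : Type*) [Group G] [Finite G] [Group.IsSolvable G]
    (H N : Subgroup G) (hH : H ≠ ⊤) (hN : N.Normal)
    (hab : ∀ a b : G, a ∈ N → b ∈ N → a * b = b * a)
    (hNH : ∀ g : G, ∃ n ∈ N, ∃ h ∈ H, g = n * h) :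
    IsCoatom H ↔ ¬∃ K : Subgroup G, K.Normal ∧ N ⊓ H < K ∧ K < N :=
  maximal_iff_chief_factor_over_inf_general G H N hH hN hab hNH
end

section
/- Let G be a finite solvable group and H a proper subgroup of G. Then H is a maximal subgroup of G if and only if H is a complement to some chief factor of G, i.e., if and only if there exist normal subgroups M < N of G such that no normal subgroup L of G satisfies M < L < N, and HN = G and H ∩ N = M. -/
/-!
Chief factors of a solvable group are abelian: if `N/M` is a chief factor then `M ⊔ ⁅N, N⁆` is a
normal subgroup strictly below `N`, hence equal to `M`. Consequently, for any `K` with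
`K ⊔ N = ⊤` and `M ≤ K`, the intersection `K ⊓ N` is normalised by `K` and, via the commutator,
by `N`, so it is normal in `G` and lies between `M` and `N`.

If `H` is maximal, take `N` minimal among the normal subgroups not contained in `H`; then
`HN = G`, and `N/(H ⊓ N)` is a chief factor by minimality of `N`. Conversely, if `H` complements
the chief factor `N/M` and `H < K`, then `K ⊓ N` is `M` or `N`: in the first case `K = H`, in the
second `K ⊇ HN = G`.
-/

namespace Subgroup

variable {G : Type*} [Group G]

def IsChiefFactor (M N : Subgroup G) : Prop :=
  M.Normal ∧ N.Normal ∧ M < N ∧ ¬∃ L : Subgroup G, L.Normal ∧ M < L ∧ L < N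

theorem sup_eq_top_iff_forall_eq_mul {H N : Subgroup G} [N.Normal] :
    H ⊔ N = ⊤ ↔ ∀ g : G, ∃ h ∈ H, ∃ n ∈ N, g = h * n := by
  rw [← coe_eq_univ, mul_normal, Set.eq_univ_iff_forall]
  simp only [Set.mem_mul, SetLike.mem_coe, eq_comm]

theorem eq_of_le_of_inf_eq_of_sup_eq {H K N : Subgroup G} [N.Normal] (hHK : H ≤ K)
    (hinf : K ⊓ N = H ⊓ N) (hsup : H ⊔ N = K ⊔ N) : H = K := by
  refine hHK.antisymm fun k hk => ?_
  have hk' : k ∈ ((H ⊔ N : Subgroup G) : Set G) := hsup ▸ mem_sup_left hk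
  rw [mul_normal] at hk'
  obtain ⟨h, hh, n, hn, rfl⟩ := hk'
  have hnK : n ∈ K := by simpa using K.mul_mem (K.inv_mem (hHK hh)) hk
  exact H.mul_mem hh (hinf ▸ ⟨hnK, hn⟩ : n ∈ H ⊓ N).1

theorem normal_inf_of_commutator_le {K N : Subgroup G} [N.Normal] (hc : ⁅N, N⁆ ≤ K)
    (hKN : K ⊔ N = ⊤) : (K ⊓ N).Normal := by
  rw [← normalizer_eq_top_iff, eq_top_iff, ← hKN]
  refine sup_le ((le_inf K.le_normalizer le_normalizer_of_normal).trans
    inf_normalizer_le_normalizer_inf) (le_normalizer_iff_commutator_le_right.mpr ?_)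
  exact (commutator_mono le_rfl inf_le_right).trans (le_inf hc (commutator_le_self N))

variable [Group.IsSolvable G]

theorem sup_commutator_lt_of_lt {M N : Subgroup G} [M.Normal] (h : M < N) :
    M ⊔ ⁅N, N⁆ < N := by
  refine lt_of_le_of_ne (sup_le h.le (commutator_le_self N)) fun heq => ?_
  let f := QuotientGroup.mk' M
  have hne : N.map f ≠ ⊥ := by
    rw [Ne, map_eq_bot_iff, QuotientGroup.ker_mk']
    exact h.not_ge
  have hperfect : ⁅N.map f, N.map f⁆ = N.map f := by
    conv_rhs => rw [← heq]
    rw [← map_commutator, map_sup, (map_eq_bot_iff _).mpr (QuotientGroup.ker_mk' M).ge,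
      bot_sup_eq]
  exact (Group.IsSolvable.commutator_lt_of_ne_bot hne).ne hperfect

theorem IsChiefFactor.commutator_le {M N : Subgroup G} (h : IsChiefFactor M N) :
    ⁅N, N⁆ ≤ M := by
  obtain ⟨hM, hN, hMN, hno⟩ := h
  by_contra hc
  exact hno ⟨M ⊔ ⁅N, N⁆, inferInstance, left_lt_sup.mpr hc, sup_commutator_lt_of_lt hMN⟩

theorem IsChiefFactor.isCoatom_of_sup_eq_top {H N : Subgroup G} (hc : IsChiefFactor (H ⊓ N) N)
    (hsup : H ⊔ N = ⊤) : IsCoatom H := by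
  have hcomm := hc.commutator_le
  obtain ⟨-, hN, hlt, hno⟩ := hc
  refine ⟨fun hH => ?_, fun K hHK => ?_⟩
  · rw [hH, top_inf_eq] at hlt
    exact lt_irrefl N hlt
  have hKN : K ⊔ N = ⊤ := top_le_iff.mp (hsup ▸ sup_le_sup_right hHK.le N)
  have hnorm : (K ⊓ N).Normal :=
    normal_inf_of_commutator_le ((hcomm.trans inf_le_left).trans hHK.le) hKN
  rcases (inf_le_inf_right N hHK.le).lt_or_eq with hHNK | heq
  · have hNK : N ≤ K := inf_eq_right.mp
      (inf_le_right.eq_of_not_lt fun hKNN => hno ⟨K ⊓ N, hnorm, hHNK, hKNN⟩)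
    rw [← hKN, sup_eq_left.mpr hNK]
  · exact absurd (eq_of_le_of_inf_eq_of_sup_eq hHK.le heq.symm (hsup.trans hKN.symm)) hHK.ne

theorem _root_.IsCoatom.exists_isChiefFactor_inf [WellFoundedLT (Subgroup G)] {H : Subgroup G}
    (hH : IsCoatom H) : ∃ N : Subgroup G, IsChiefFactor (H ⊓ N) N ∧ H ⊔ N = ⊤ := by
  obtain ⟨N, hmin⟩ := exists_minimal_of_wellFoundedLT (fun N : Subgroup G => N.Normal ∧ ¬N ≤ H)
    ⟨⊤, inferInstance, fun h => hH.1 (top_le_iff.mp h)⟩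
  obtain ⟨hN, hNH⟩ := hmin.prop
  have hsup : H ⊔ N = ⊤ := hH.2 _ (left_lt_sup.mpr hNH)
  have hcomm : ⁅N, N⁆ ≤ H := by
    by_contra hc
    have hNbot : N ≠ ⊥ := fun h => hNH (h ▸ bot_le)
    exact hmin.not_prop_of_lt (Group.IsSolvable.commutator_lt_of_ne_bot hNbot)
      ⟨commutator_normal N N, hc⟩
  refine ⟨N, ⟨normal_inf_of_commutator_le hcomm hsup, hN, inf_lt_right.mpr hNH, ?_⟩, hsup⟩
  rintro ⟨L, hL, hHNL, hLN⟩
  have hLH : L ≤ H := not_not.mp fun h => hmin.not_prop_of_lt hLN ⟨hL, h⟩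
  exact hHNL.not_ge (le_inf hLH hLN.le)

end Subgroup

open Subgroup

theorem maximal_iff_complement_to_chief_factor_general
    (G : Type*) [Group G] [Finite G] [Group.IsSolvable G] (H : Subgroup G) :
    IsCoatom H ↔
      ∃ M N : Subgroup G, M.Normal ∧ N.Normal ∧ M < N ∧
        (¬∃ L : Subgroup G, L.Normal ∧ M < L ∧ L < N) ∧
        (∀ g : G, ∃ h ∈ H, ∃ n ∈ N, g = h * n) ∧ H ⊓ N = M := by
  constructor
  · intro hH
    obtain ⟨N, ⟨hM, hN, hlt, hno⟩, hsup⟩ := hH.exists_isChiefFactor_inf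
    exact ⟨H ⊓ N, N, hM, hN, hlt, hno, sup_eq_top_iff_forall_eq_mul.mp hsup, rfl⟩
  · rintro ⟨M, N, hM, hN, hlt, hno, hmul, rfl⟩
    exact IsChiefFactor.isCoatom_of_sup_eq_top ⟨hM, hN, hlt, hno⟩
      (sup_eq_top_iff_forall_eq_mul.mpr hmul)

/-- Let `G` be a finite solvable group and `H` a proper subgroup. Then `H` is a maximal
subgroup of `G` if and only if `H` is a complement to some chief factor `N/M` of `G`:
`HN = G` and `H ⊓ N = M`. -/
theorem maximal_iff_complement_to_chief_factor
    (G : Type*) [Group G] [Finite G] [Group.IsSolvable G] (H : Subgroup G) (hH : H ≠ ⊤) :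
    IsCoatom H ↔
      ∃ M N : Subgroup G, M.Normal ∧ N.Normal ∧ M < N ∧
        (¬∃ L : Subgroup G, L.Normal ∧ M < L ∧ L < N) ∧
        (∀ g : G, ∃ h ∈ H, ∃ n ∈ N, g = h * n) ∧ H ⊓ N = M :=
  maximal_iff_complement_to_chief_factor_general G H
end

section
/- Let G be a finite group, p a prime, N an abelian normal p-subgroup of G, and P a Sylow p-subgroup of G containing N. Then N has a complement in G (a subgroup K with N ∩ K = 1 and NK = G) if and only if N has a complement in P (a subgroup K ≤ P with N ∩ K = 1 and NK = P). -/
/-- (Gaschütz) Let `N` be an abelian normal `p`-subgroup of a finite group `G`, and `P` a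
Sylow `p`-subgroup of `G` containing `N`. Then `N` has a complement in `G` if and only if
`N` has a complement in `P`. -/
theorem gaschutz_complement_iff_complement_in_sylow
    (G : Type*) [Group G] [Finite G] (p : ℕ) (hp : p.Prime)
    (N : Subgroup G) (hN : N.Normal) (hNp : IsPGroup p N)
    (hab : ∀ a b : G, a ∈ N → b ∈ N → a * b = b * a)
    (P : Sylow p G) (hNP : N ≤ P) :
    (∃ K : Subgroup G, N ⊓ K = ⊥ ∧ ∀ g : G, ∃ n ∈ N, ∃ k ∈ K, g = n * k) ↔
      (∃ K : Subgroup G, K ≤ P ∧ N ⊓ K = ⊥ ∧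
        ∀ g ∈ (P : Subgroup G), ∃ n ∈ N, ∃ k ∈ K, g = n * k) := by
  haveI : Fact p.Prime := ⟨hp⟩
  constructor
  · -- easy direction: intersect a complement with P
    rintro ⟨K, hK1, hK2⟩
    refine ⟨K ⊓ P, inf_le_right, ?_, ?_⟩
    · rw [eq_bot_iff]
      intro x hx
      have : x ∈ N ⊓ K := ⟨hx.1, hx.2.1⟩
      rw [hK1] at this; exact this
    · intro g hg
      obtain ⟨n, hn, k, hk, rfl⟩ := hK2 g
      refine ⟨n, hn, k, ⟨hk, ?_⟩, rfl⟩
      have : n⁻¹ * (n * k) ∈ (P : Subgroup G) := mul_mem (inv_mem (hNP hn)) hg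
      simp only [inv_mul_cancel_left] at this; exact this
  · -- Gaschütz's averaging argument
    rintro ⟨Q, hQP, hNQ, hPQ⟩
    letI : CommGroup ↥N :=
      { (inferInstance : Group ↥N) with
        mul_comm := fun a b => Subtype.ext (hab a b a.2 b.2) }
    haveI : Fintype (G ⧸ (P : Subgroup G)) := Fintype.ofFinite _
    -- uniqueness of N-Q decompositions
    have uniq : ∀ n₁ n₂ q₁ q₂ : G, n₁ ∈ N → n₂ ∈ N → q₁ ∈ Q → q₂ ∈ Q →
        n₁ * q₁ = n₂ * q₂ → n₁ = n₂ ∧ q₁ = q₂ := by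
      intro n₁ n₂ q₁ q₂ h1 h2 h3 h4 heq
      have hmem : n₂⁻¹ * n₁ ∈ N ⊓ Q := by
        constructor
        · exact N.mul_mem (N.inv_mem h2) h1
        · have : n₂⁻¹ * n₁ = q₂ * q₁⁻¹ := by
            rw [eq_comm, ← mul_inv_eq_iff_eq_mul] at heq
            rw [← heq]; group
          rw [this]; exact Q.mul_mem h4 (Q.inv_mem h3)
      rw [hNQ] at hmem
      have hn : n₂⁻¹ * n₁ = 1 := hmem
      have hn1 : n₁ = n₂ := by
        rw [inv_mul_eq_one] at hn; exact hn.symm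
      subst hn1
      exact ⟨rfl, mul_left_cancel heq⟩
    -- the P-component of g acting on coset x
    have pmem : ∀ (g : G) (x : G ⧸ (P : Subgroup G)),
        ((g • x).out)⁻¹ * (g * x.out) ∈ (P : Subgroup G) := by
      intro g x
      have h1 : (QuotientGroup.mk ((g • x).out) : G ⧸ (P : Subgroup G)) =
          QuotientGroup.mk (g * x.out) := by
        rw [QuotientGroup.out_eq']
        have := MulAction.Quotient.mk_smul_out (P : Subgroup G) g x
        rw [← this]; rfl
      exact QuotientGroup.eq.mp h1
    choose nn hnnN qq hqqQ hdec using
      fun (g : G) (x : G ⧸ (P : Subgroup G)) => hPQ _ (pmem g x)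
    -- multiplicativity of components
    have pmul : ∀ (g h : G) (x : G ⧸ (P : Subgroup G)),
        nn (g * h) x * qq (g * h) x =
          (nn g (h • x) * (qq g (h • x) * nn h x * (qq g (h • x))⁻¹)) *
            (qq g (h • x) * qq h x) := by
      intro g h x
      rw [← hdec (g * h) x]
      have h1 := hdec g (h • x)
      have h2 := hdec h x
      rw [mul_smul]
      have e : (Quotient.out (g • h • x))⁻¹ * (g * h * Quotient.out x) =
          ((Quotient.out (g • h • x))⁻¹ * (g * Quotient.out (h • x))) *
            ((Quotient.out (h • x))⁻¹ * (h * Quotient.out x)) := by group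
      rw [e, h1, h2]
      group
    have nn_mul : ∀ (g h : G) (x : G ⧸ (P : Subgroup G)),
        nn (g * h) x = nn g (h • x) * (qq g (h • x) * nn h x * (qq g (h • x))⁻¹) := by
      intro g h x
      refine (uniq _ _ _ _ (hnnN _ _) ?_ (hqqQ _ _) (mul_mem (hqqQ _ _) (hqqQ _ _))
        (pmul g h x)).1
      refine mul_mem (hnnN _ _) ?_
      have := hN.conj_mem _ (hnnN h x) (qq g (h • x))
      exact this
    -- conjugation as a hom of N
    have hconjmem : ∀ (g : G) (n : ↥N), g * ↑n * g⁻¹ ∈ N := fun g n => hN.conj_mem _ n.2 g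
    let conjN : G → ↥N →* ↥N := fun g =>
      { toFun := fun n => ⟨g * ↑n * g⁻¹, hconjmem g n⟩
        map_one' := by ext; simp
        map_mul' := fun a b => by ext; push_cast; group }
    -- the crossed homomorphism ν
    let c : G → G ⧸ (P : Subgroup G) → ↥N := fun g x =>
      ⟨(g • x).out * nn g x * ((g • x).out)⁻¹, hN.conj_mem _ (hnnN g x) _⟩
    let ν : G → ↥N := fun g => ∏ x : G ⧸ (P : Subgroup G), c g x
    have c_mul : ∀ (g h : G) (x : G ⧸ (P : Subgroup G)),
        c (g * h) x = c g (h • x) * conjN g (c h x) := by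
      intro g h x
      apply Subtype.ext
      show ((g * h) • x).out * nn (g * h) x * (((g * h) • x).out)⁻¹ = _
      rw [mul_smul, nn_mul]
      set s₂ := (g • h • x).out with hs₂
      set s₁ := (h • x).out with hs₁
      set n₂ := nn g (h • x)
      set q₂ := qq g (h • x)
      set n := nn h x
      have hd : s₂⁻¹ * (g * s₁) = n₂ * q₂ := hdec g (h • x)
      have hq : q₂ = n₂⁻¹ * (s₂⁻¹ * (g * s₁)) := by rw [hd]; group
      have hA : s₂ * n₂ * s₂⁻¹ ∈ N := hN.conj_mem _ (hnnN g (h • x)) _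
      have hB : g * (s₁ * n * s₁⁻¹) * g⁻¹ ∈ N :=
        hN.conj_mem _ (hN.conj_mem _ (hnnN h x) _) _
      have key : s₂ * (q₂ * n * q₂⁻¹) * s₂⁻¹ = g * (s₁ * n * s₁⁻¹) * g⁻¹ := by
        calc s₂ * (q₂ * n * q₂⁻¹) * s₂⁻¹
            = (s₂ * n₂ * s₂⁻¹)⁻¹ * (g * (s₁ * n * s₁⁻¹) * g⁻¹) * (s₂ * n₂ * s₂⁻¹) := by
              rw [hq]; group
          _ = (g * (s₁ * n * s₁⁻¹) * g⁻¹) * (s₂ * n₂ * s₂⁻¹)⁻¹ * (s₂ * n₂ * s₂⁻¹) := by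
              rw [hab _ _ (inv_mem hA) hB]
          _ = g * (s₁ * n * s₁⁻¹) * g⁻¹ := by group
      show s₂ * (n₂ * (q₂ * n * q₂⁻¹)) * s₂⁻¹ =
        (s₂ * n₂ * s₂⁻¹) * (g * (s₁ * n * s₁⁻¹) * g⁻¹)
      rw [← key]; group
    have ν_mul : ∀ g h : G, ν (g * h) = ν g * conjN g (ν h) := by
      intro g h
      show ∏ x : G ⧸ (P : Subgroup G), c (g * h) x = _
      have : ∀ x, c (g * h) x = c g (h • x) * conjN g (c h x) := c_mul g h
      rw [Finset.prod_congr rfl (fun x _ => this x), Finset.prod_mul_distrib]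
      congr 1
      · exact Fintype.prod_bijective (fun x => h • x) (MulAction.bijective h)
          (fun x => c g (h • x)) (fun x => c g x) (fun _ => rfl)
      · exact (map_prod (conjN g) _ _).symm
    -- ν on N is the m-th power map
    have smul_N : ∀ (n : G), n ∈ N → ∀ x : G ⧸ (P : Subgroup G), n • x = x := by
      intro n hn x
      have h1 : (QuotientGroup.mk (n * x.out) : G ⧸ (P : Subgroup G)) =
          QuotientGroup.mk x.out := by
        rw [QuotientGroup.eq]
        have : (n * x.out)⁻¹ * x.out = x.out⁻¹ * n⁻¹ * x.out := by group
        rw [this]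
        have hmem : x.out⁻¹ * n⁻¹ * (x.out⁻¹)⁻¹ ∈ N := hN.conj_mem _ (inv_mem hn) _
        simp only [inv_inv] at hmem
        exact hNP hmem
      have h2 := MulAction.Quotient.mk_smul_out (P : Subgroup G) n x
      calc n • x = QuotientGroup.mk (n • x.out) := h2.symm
        _ = QuotientGroup.mk (n * x.out) := rfl
        _ = QuotientGroup.mk x.out := h1
        _ = x := QuotientGroup.out_eq' x
    set m := Fintype.card (G ⧸ (P : Subgroup G)) with hm_def
    have ν_N : ∀ n : ↥N, ν ↑n = n ^ m := by
      intro n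
      have hc : ∀ x : G ⧸ (P : Subgroup G), c ↑n x = n := by
        intro x
        have hs := smul_N ↑n n.2 x
        have hd := hdec (↑n : G) x
        rw [hs] at hd
        have huq := uniq (x.out⁻¹ * ↑n * x.out) (nn ↑n x) 1 (qq ↑n x)
          (by have := hN.conj_mem _ n.2 x.out⁻¹; simpa using this)
          (hnnN _ _) (one_mem Q) (hqqQ _ _)
          (by rw [mul_one, ← hd]; group)
        apply Subtype.ext
        show ((↑n : G) • x).out * nn ↑n x * (((↑n : G) • x).out)⁻¹ = ↑n
        rw [hs, ← huq.1]
        group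
      show ∏ x : G ⧸ (P : Subgroup G), c ↑n x = n ^ m
      rw [Finset.prod_congr rfl (fun x _ => hc x), Finset.prod_const, Finset.card_univ]
    -- p does not divide m
    have hpm : ¬ p ∣ m := by
      have h1 : (P : Subgroup G).index = m := by
        rw [Subgroup.index_eq_card, Nat.card_eq_fintype_card]
      rw [← h1]
      exact P.not_dvd_index
    -- elements of N killed by m-th power are trivial
    have hkill : ∀ n : ↥N, n ^ m = 1 → n = 1 := by
      intro n h1
      obtain ⟨k, hk⟩ := hNp n
      have h2 := orderOf_dvd_of_pow_eq_one h1
      have h3 := orderOf_dvd_of_pow_eq_one hk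
      obtain ⟨j, hj, hje⟩ := (Nat.dvd_prime_pow hp).mp h3
      rcases Nat.eq_zero_or_pos j with rfl | hjpos
      · rw [pow_zero] at hje
        exact orderOf_eq_one_iff.mp hje
      · exfalso
        exact hpm (dvd_trans (hje ▸ dvd_pow_self p hjpos.ne') h2)
    -- m-th power map is surjective on N
    have hsurj : Function.Surjective (fun n : ↥N => n ^ m) := by
      have hinj : Function.Injective (fun n : ↥N => n ^ m) := by
        intro a b hab'
        have : (a * b⁻¹) ^ m = 1 := by
          rw [mul_pow, inv_pow]
          simp only at hab'
          rw [hab', mul_inv_cancel]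
        have := hkill _ this
        rwa [mul_inv_eq_one] at this
      exact Finite.surjective_of_injective hinj
    -- build the complement
    have conjN_inj : ∀ (g : G) (x : ↥N), conjN g x = 1 → x = 1 := by
      intro g x hx
      have : g * ↑x * g⁻¹ = 1 := congrArg Subtype.val hx
      apply Subtype.ext
      have : (↑x : G) = g⁻¹ * 1 * g := by rw [← this]; group
      simpa using this
    have ν_one : ν 1 = 1 := by
      have := ν_N 1
      simpa using this
    refine ⟨{ carrier := {g : G | ν g = 1},
              one_mem' := ν_one,
              mul_mem' := ?_,
              inv_mem' := ?_ }, ?_, ?_⟩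
    · intro a b ha hb
      show ν (a * b) = 1
      rw [ν_mul, ha, hb]
      simp
    · intro a ha
      show ν a⁻¹ = 1
      have h1 : ν (a * a⁻¹) = 1 := by rw [mul_inv_cancel]; exact ν_one
      rw [ν_mul, ha, one_mul] at h1
      exact conjN_inj a _ h1
    · rw [eq_bot_iff]
      intro x hx
      obtain ⟨hxN, hxK⟩ := hx
      have hνx : ν x = 1 := hxK
      have := ν_N ⟨x, hxN⟩
      rw [hνx] at this
      have := hkill _ this.symm
      have : x = 1 := congrArg Subtype.val this
      simpa using this
    · intro g
      obtain ⟨u, hu⟩ := hsurj (ν g)⁻¹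
      refine ⟨(↑u)⁻¹, inv_mem u.2, ↑u * g, ?_, by group⟩
      show ν (↑u * g) = 1
      rw [ν_mul]
      have h1 : ν ↑u = u ^ m := ν_N u
      have h2 : conjN ↑u (ν g) = ν g := by
        apply Subtype.ext
        show (↑u : G) * ↑(ν g) * (↑u : G)⁻¹ = (↑(ν g) : G)
        rw [hab _ _ u.2 (ν g).2]
        group
      have hu' : u ^ m = (ν g)⁻¹ := hu
      rw [h1, h2, hu']
      exact inv_mul_cancel _
end

section
/- Let G be a finite group such that: (1) G is not supersolvable; (2) every proper subgroup of G is supersolvable; and (3) every Sylow subgroup of G is elementary abelian. Then every chief factor of G is complemented: for all normal subgroups M < N of G such that no normal subgroup L of G satisfies M < L < N, the image of N in the quotient group G/M has a complement in G/M, i.e., there is a subgroup K of G/M with (N/M) ∩ K = 1 and (N/M)K = G/M. -/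
/-- A finite group is supersolvable if it has a chain of subgroups, each normal in `G`,
from `⊥` to `⊤`, with all successive quotients cyclic. -/
def IsSupersolvable (G : Type*) [Group G] : Prop :=
  ∃ (n : ℕ) (N : Fin (n + 1) → Subgroup G),
    N 0 = ⊥ ∧ N (Fin.last n) = ⊤ ∧
    (∀ i : Fin n, N i.castSucc ≤ N i.succ) ∧
    ∃ _hn : ∀ i : Fin (n + 1), (N i).Normal,
    ∀ i : Fin n,
      haveI : ((N i.castSucc).subgroupOf (N i.succ)).Normal :=
        Subgroup.Normal.subgroupOf (_hn i.castSucc) (N i.succ)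
      IsCyclic (↥(N i.succ) ⧸ (N i.castSucc).subgroupOf (N i.succ))

/-- A group is elementary abelian (for the prime `p`) if it is a commutative `p`-group
in which every element satisfies `g ^ p = 1`. -/
def IsElementaryAbelian (p : ℕ) (P : Type*) [Group P] : Prop :=
  IsPGroup p P ∧ (∀ a b : P, a * b = b * a) ∧ ∀ g : P, g ^ p = 1

/-- In a finite commutative group of exponent `p`, every subgroup has a complement. -/
lemma elab_compl {V : Type*} [CommGroup V] [Finite V] {p : ℕ} (hp : p.Prime)
    (hexp : ∀ x : V, x ^ p = 1) (A : Subgroup V) :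
    ∃ K : Subgroup V, A ⊓ K = ⊥ ∧ A ⊔ K = ⊤ := by
  haveI : Finite (Subgroup V) := Finite.of_injective _ SetLike.coe_injective
  obtain ⟨K, hKs, hKmax⟩ := Set.Finite.exists_maximalFor id {K : Subgroup V | A ⊓ K = ⊥}
      (Set.toFinite _) ⟨⊥, by simp⟩
  simp only [Set.mem_setOf_eq] at hKs hKmax
  refine ⟨K, hKs, ?_⟩
  by_contra hne
  obtain ⟨x, hx⟩ : ∃ x : V, x ∉ A ⊔ K := by
    by_contra h
    push_neg at h
    exact hne ((Subgroup.eq_top_iff' (A ⊔ K)).mpr h)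
  have hxK : x ∉ K := fun h => hx ((le_sup_right : K ≤ A ⊔ K) h)
  have hins : A ⊓ (K ⊔ Subgroup.zpowers x) = ⊥ := by
    rw [eq_bot_iff]
    intro y hy
    rw [Subgroup.mem_inf] at hy
    obtain ⟨hyA, hyK⟩ := hy
    rw [Subgroup.mem_sup] at hyK
    obtain ⟨k, hk, z, hz, rfl⟩ := hyK
    obtain ⟨m, rfl⟩ := Subgroup.mem_zpowers_iff.mp hz
    have hxm : x ^ m ∈ A ⊔ K := by
      have h1 : x ^ m = k⁻¹ * (k * x ^ m) := by group
      rw [h1]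
      exact mul_mem ((le_sup_right : K ≤ A ⊔ K) (inv_mem hk))
        ((le_sup_left : A ≤ A ⊔ K) hyA)
    have hxm1 : x ^ m = 1 := by
      by_contra hne1
      have hpd : ¬ ((p : ℤ) ∣ m) := by
        rintro ⟨t, rfl⟩
        apply hne1
        rw [zpow_mul, zpow_natCast, hexp x, one_zpow]
      have hcp : IsCoprime (p : ℤ) m := by
        rw [Int.isCoprime_iff_gcd_eq_one]; show Nat.Coprime (p : ℤ).natAbs m.natAbs
        simp only [Int.natAbs_natCast]
        exact (Nat.Prime.coprime_iff_not_dvd hp).mpr fun hd => hpd (Int.natCast_dvd.mpr hd)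
      obtain ⟨u, v, huv⟩ := hcp
      apply hx
      have hx1 : x = ((x ^ (p:ℤ)) ^ u) * ((x ^ m) ^ v) := by
        rw [← zpow_mul, ← zpow_mul, ← zpow_add, mul_comm ((p:ℤ)) u, mul_comm m v, huv, zpow_one]
      rw [hx1, zpow_natCast, hexp x, one_zpow, one_mul]
      exact zpow_mem hxm v
    rw [hxm1, mul_one] at hyA
    have : k ∈ A ⊓ K := ⟨hyA, hk⟩
    rw [hKs] at this
    rw [hxm1, mul_one]
    exact this
  have hKK : K = K ⊔ Subgroup.zpowers x := le_antisymm le_sup_left (hKmax hins le_sup_left)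
  exact hxK (hKK ▸ (le_sup_right : Subgroup.zpowers x ≤ K ⊔ Subgroup.zpowers x)
    (Subgroup.mem_zpowers x))

/-- A supersolvable group is solvable. -/
lemma IsSupersolvable.isSolvable {H : Type*} [Group H] (h : IsSupersolvable H) :
    Group.IsSolvable H := by
  obtain ⟨n, Nc, h0, htop, hle, hnorm, hcyc⟩ := h
  have hs : ∀ i : Fin (n + 1), Group.IsSolvable ↥(Nc i) := by
    intro i
    induction i using Fin.induction with
    | zero =>
      rw [h0]
      letI : CommGroup ↥(⊥ : Subgroup H) :=
        { (inferInstance : Group ↥(⊥ : Subgroup H)) with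
          mul_comm := fun a b => Subsingleton.elim _ _ }
      infer_instance
    | succ i ih =>
      haveI hn1 : ((Nc i.castSucc).subgroupOf (Nc i.succ)).Normal :=
        Subgroup.Normal.subgroupOf (hnorm i.castSucc) (Nc i.succ)
      haveI hcy := hcyc i
      letI : CommGroup (↥(Nc i.succ) ⧸ (Nc i.castSucc).subgroupOf (Nc i.succ)) :=
        IsCyclic.commGroup
      haveI : Group.IsSolvable (↥(Nc i.succ) ⧸ (Nc i.castSucc).subgroupOf (Nc i.succ)) :=
        inferInstance
      haveI := ih
      refine solvable_of_ker_le_range (Subgroup.inclusion (hle i))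
        (QuotientGroup.mk' ((Nc i.castSucc).subgroupOf (Nc i.succ))) ?_
      rw [QuotientGroup.ker_mk', Subgroup.inclusion_range]
  have := hs (Fin.last n)
  rw [htop] at this
  exact solvable_of_surjective (f := (Subgroup.topEquiv (G := H)).toMonoidHom)
    (Subgroup.topEquiv (G := H)).surjective

/-- Gaschütz-type splitting: if an abelian normal subgroup `A` of a finite group `H` is
contained in a subgroup `P` of index coprime to `|A|` whose elements commute, and `A`
has a complement in `P`, then `A` has a complement in `H`. -/
lemma gaschutz_aux {H : Type*} [Group H] [Finite H]
    (A P : Subgroup H) (hA : A.Normal) (hAP : A ≤ P)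
    (hPcomm : ∀ x ∈ P, ∀ y ∈ P, x * y = y * x)
    (hcop : Nat.Coprime P.index (Nat.card A))
    (K0 : Subgroup H) (hK0P : K0 ≤ P) (hAK0 : A ⊓ K0 = ⊥)
    (hgen : ∀ x ∈ P, ∃ a ∈ A, ∃ k ∈ K0, x = a * k) :
    ∃ K : Subgroup H, A ⊓ K = ⊥ ∧ ∀ g : H, ∃ a ∈ A, ∃ k ∈ K, g = a * k := by
  classical
  by_cases hA1 : Nat.card A = 1
  · have hAbot : A = ⊥ := Subgroup.card_eq_one.mp hA1
    exact ⟨⊤, by simp [hAbot], fun g => ⟨1, A.one_mem, g, Subgroup.mem_top g, (one_mul g).symm⟩⟩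
  have hA1' : 1 < Nat.card A := by
    have := Nat.card_pos (α := ↥A); omega
  choose aof haA kof hkK hxeq using hgen
  have huniq : ∀ {a₁ k₁ a₂ k₂ : H}, a₁ ∈ A → k₁ ∈ K0 → a₂ ∈ A → k₂ ∈ K0 →
      a₁ * k₁ = a₂ * k₂ → a₁ = a₂ := by
    intro a₁ k₁ a₂ k₂ ha₁ hk₁ ha₂ hk₂ heq
    have h2 : a₂⁻¹ * a₁ = k₂ * k₁⁻¹ := by
      calc a₂⁻¹ * a₁ = a₂⁻¹ * (a₁ * k₁) * k₁⁻¹ := by group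
        _ = a₂⁻¹ * (a₂ * k₂) * k₁⁻¹ := by rw [heq]
        _ = k₂ * k₁⁻¹ := by group
    have h1 : a₂⁻¹ * a₁ ∈ A ⊓ K0 := by
      rw [Subgroup.mem_inf]
      exact ⟨A.mul_mem (A.inv_mem ha₂) ha₁,
        h2 ▸ K0.mul_mem hk₂ (K0.inv_mem hk₁)⟩
    rw [hAK0, Subgroup.mem_bot] at h1
    have := inv_mul_eq_one.mp h1
    exact this.symm
  letI cA : CommGroup ↥A :=
    { (inferInstance : Group ↥A) with
      mul_comm := fun a b => Subtype.ext (hPcomm _ (hAP a.2) _ (hAP b.2)) }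
  have conjmem : ∀ (g : H) (a : ↥A), g * ↑a * g⁻¹ ∈ A := fun g a => hA.conj_mem _ a.2 g
  let cg : H → ↥A →* ↥A := fun g =>
    { toFun := fun a => ⟨g * ↑a * g⁻¹, conjmem g a⟩
      map_one' := by ext; simp
      map_mul' := by
        intro a b
        ext
        show g * ↑(a * b) * g⁻¹ = (g * ↑a * g⁻¹) * (g * ↑b * g⁻¹)
        rw [Subgroup.coe_mul]
        group }
  have cg_apply : ∀ (g : H) (a : ↥A), (↑(cg g a) : H) = g * ↑a * g⁻¹ := fun _ _ => rfl
  have cg_comp : ∀ (g h : H) (a : ↥A), cg g (cg h a) = cg (g * h) a := by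
    intro g h a
    ext
    rw [cg_apply, cg_apply, cg_apply]
    group
  have cg_one : ∀ a : ↥A, cg 1 a = a := by
    intro a; ext; rw [cg_apply]; group
  have cg_P : ∀ g ∈ P, ∀ a : ↥A, cg g a = a := by
    intro g hg a
    ext
    rw [cg_apply, hPcomm g hg ↑a (hAP a.2)]
    group
  let C := H ⧸ P
  letI : Fintype C := Fintype.ofFinite C
  let rep : C → H := Quotient.out
  have hrep : ∀ c : C, (QuotientGroup.mk (rep c) : C) = c := fun c => QuotientGroup.out_eq' c
  let pf : H → C → H := fun h c => (rep (h • c))⁻¹ * h * rep c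
  have hpfP : ∀ h c, pf h c ∈ P := by
    intro h c
    have h1 : (QuotientGroup.mk (rep (h • c)) : C) = QuotientGroup.mk (h * rep c) := by
      rw [hrep]
      conv_lhs => rw [← hrep c]
      rfl
    have h2 := QuotientGroup.eq.mp h1
    simpa [pf, mul_assoc] using h2
  have hcoc : ∀ g h c, pf (g * h) c = pf g (h • c) * pf h c := by
    intro g h c
    have h1 : (g * h) • c = g • (h • c) := mul_smul g h c
    simp only [pf, h1]
    group
  let Φ : H → ↥A := fun x => if hx : x ∈ P then ⟨aof x hx, haA x hx⟩ else 1
  have hΦval : ∀ x (hx : x ∈ P), (↑(Φ x) : H) = aof x hx := by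
    intro x hx; simp [Φ, hx]
  have hΦmul : ∀ x y, x ∈ P → y ∈ P → Φ (x * y) = Φ x * Φ y := by
    intro x y hx hy
    apply Subtype.ext
    rw [Subgroup.coe_mul, hΦval _ (P.mul_mem hx hy), hΦval _ hx, hΦval _ hy]
    apply huniq (haA _ _) (hkK _ _) (A.mul_mem (haA _ _) (haA _ _))
      (K0.mul_mem (hkK _ _) (hkK _ _))
    rw [← hxeq (x * y) (P.mul_mem hx hy)]
    have hswap : kof x hx * aof y hy = aof y hy * kof x hx :=
      hPcomm _ (hK0P (hkK _ _)) _ (hAP (haA _ _))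
    calc x * y = (aof x hx * kof x hx) * (aof y hy * kof y hy) := by
          rw [← hxeq, ← hxeq]
      _ = aof x hx * (kof x hx * aof y hy) * kof y hy := by group
      _ = aof x hx * (aof y hy * kof x hx) * kof y hy := by rw [hswap]
      _ = (aof x hx * aof y hy) * (kof x hx * kof y hy) := by group
  have hΦA : ∀ x (hx : x ∈ A), Φ x = ⟨x, hx⟩ := by
    intro x hx
    apply Subtype.ext
    rw [hΦval _ (hAP hx)]
    exact huniq (haA _ _) (hkK _ _) hx K0.one_mem (by rw [← hxeq x (hAP hx), mul_one])
  have hΦ1 : Φ 1 = 1 := by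
    rw [hΦA 1 A.one_mem]; rfl
  let t : H → C → ↥A := fun h c => cg (rep (h • c)) (Φ (pf h c))
  let ψ : H → ↥A := fun h => ∏ c : C, t h c
  have hper : ∀ g h c, t (g * h) c = t g (h • c) * cg g (t h c) := by
    intro g h c
    show cg (rep ((g * h) • c)) (Φ (pf (g * h) c)) = _
    rw [hcoc g h c, hΦmul _ _ (hpfP g (h • c)) (hpfP h c), map_mul, mul_smul g h c]
    congr 1
    rw [cg_comp]
    have e4 : rep (g • (h • c)) = g * rep (h • c) * (pf g (h • c))⁻¹ := by
      simp only [pf]; group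
    rw [e4, ← cg_comp, cg_P _ (P.inv_mem (hpfP g (h • c)))]
  have hψ : ∀ g h, ψ (g * h) = ψ g * cg g (ψ h) := by
    intro g h
    have h1 : ψ (g * h) = ∏ c : C, (t g (h • c) * cg g (t h c)) := by
      exact Finset.prod_congr rfl fun c _ => hper g h c
    rw [h1, Finset.prod_mul_distrib, map_prod]
    congr 1
    exact Equiv.prod_comp (MulAction.toPerm h) (t g)
  have hsmulA : ∀ (x : H), x ∈ A → ∀ c : C, x • c = c := by
    intro x hx c
    conv_lhs => rw [← hrep c]
    show (QuotientGroup.mk (x * rep c) : C) = c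
    conv_rhs => rw [← hrep c]
    apply QuotientGroup.eq.mpr
    have := hA.conj_mem _ (A.inv_mem hx) (rep c)⁻¹
    simpa [mul_assoc, mul_inv_rev] using hAP this
  have hψA : ∀ (x : H) (hx : x ∈ A), ψ x = (⟨x, hx⟩ : ↥A) ^ (Fintype.card C) := by
    intro x hx
    have hterm : ∀ c : C, t x c = ⟨x, hx⟩ := by
      intro c
      show cg (rep (x • c)) (Φ (pf x c)) = _
      have hpfx : pf x c = (rep c)⁻¹ * x * rep c := by
        simp only [pf, hsmulA x hx c]
      have hpfA : pf x c ∈ A := by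
        rw [hpfx]
        simpa [inv_inv] using hA.conj_mem _ hx (rep c)⁻¹
      rw [hsmulA x hx c, hΦA _ hpfA]
      apply Subtype.ext
      rw [cg_apply]
      show rep c * pf x c * (rep c)⁻¹ = x
      rw [hpfx]; group
    show (∏ c : C, t x c) = _
    rw [Finset.prod_congr rfl fun c _ => hterm c, Finset.prod_const, Finset.card_univ]
  have hn : P.index = Fintype.card C := by
    rw [← Nat.card_eq_fintype_card]; rfl
  obtain ⟨m, -, hm⟩ := Nat.exists_mul_mod_eq_one_of_coprime hcop hA1'
  have hpow : ∀ b : ↥A, (b ^ Fintype.card C) ^ m = b := by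
    intro b
    rw [← pow_mul, ← hn]
    conv_lhs => rw [← Nat.div_add_mod (P.index * m) (Nat.card ↥A)]
    rw [hm, pow_add, pow_mul, pow_card_eq_one', one_pow, one_mul, pow_one]
  have hψ1 : ψ 1 = 1 := by
    have hterm : ∀ c : C, t 1 c = 1 := by
      intro c
      show cg (rep ((1 : H) • c)) (Φ (pf 1 c)) = 1
      have hc : pf 1 c = 1 := by simp only [pf, one_smul]; group
      rw [hc, hΦ1, map_one]
    show (∏ c : C, t 1 c) = 1
    rw [Finset.prod_congr rfl fun c _ => hterm c, Finset.prod_const_one]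
  let K : Subgroup H :=
    { carrier := {h : H | ψ h ^ m = 1}
      one_mem' := by
        show ψ 1 ^ m = 1
        rw [hψ1, one_pow]
      mul_mem' := by
        intro g h hg hh
        show ψ (g * h) ^ m = 1
        have hg' : ψ g ^ m = 1 := hg
        have hh' : ψ h ^ m = 1 := hh
        rw [hψ g h, mul_pow, hg', ← map_pow, hh', map_one, one_mul]
      inv_mem' := by
        intro g hg
        show ψ g⁻¹ ^ m = 1
        have hg' : ψ g ^ m = 1 := hg
        have h1 : cg g (ψ g⁻¹) = (ψ g)⁻¹ := by
          have h2 := hψ g g⁻¹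
          rw [mul_inv_cancel, hψ1] at h2
          exact (mul_eq_one_iff_inv_eq.mp h2.symm).symm
        have h2 : ψ g⁻¹ = cg g⁻¹ ((ψ g)⁻¹) := by
          rw [← h1, cg_comp, inv_mul_cancel, cg_one]
        rw [h2, ← map_pow, inv_pow, hg', inv_one, map_one] }
  have hmemK : ∀ x : H, x ∈ K ↔ ψ x ^ m = 1 := fun x => Iff.rfl
  refine ⟨K, ?_, ?_⟩
  · rw [eq_bot_iff]
    intro x hx
    rw [Subgroup.mem_inf] at hx
    obtain ⟨hxA, hxK⟩ := hx
    have h1 : ψ x ^ m = 1 := (hmemK x).mp hxK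
    rw [hψA x hxA, hpow] at h1
    rw [Subgroup.mem_bot]
    exact congrArg Subtype.val h1
  · intro g
    refine ⟨↑(ψ g ^ m), (ψ g ^ m).2, (↑(ψ g ^ m) : H)⁻¹ * g, ?_, by group⟩
    rw [hmemK]
    have hco : ((↑(ψ g ^ m) : H)⁻¹) = (↑((ψ g ^ m)⁻¹) : H) := rfl
    have h1 : ψ ((↑(ψ g ^ m) : H)⁻¹ * g) = ((ψ g ^ m)⁻¹) ^ Fintype.card C * ψ g := by
      rw [hψ]
      congr 1
      · rw [hco, hψA _ ((ψ g ^ m)⁻¹).2]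
      · exact cg_P _ (hAP (A.inv_mem (ψ g ^ m).2)) _
    rw [h1, mul_pow, hpow, inv_mul_cancel]

/-- For a finite group `G` that is not supersolvable, with every proper subgroup
supersolvable and all Sylow subgroups elementary abelian, every chief factor of `G`
is complemented in the corresponding quotient. -/
theorem chief_factors_complemented
    (G : Type*) [Group G] [Finite G]
    (h1 : ¬IsSupersolvable G)
    (h2 : ∀ H : Subgroup G, H ≠ ⊤ → IsSupersolvable H)
    (h3 : ∀ (p : ℕ) (_ : p.Prime) (P : Sylow p G), IsElementaryAbelian p P) :
    ∀ (M N : Subgroup G) (hM : M.Normal), N.Normal → M < N →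
      (¬∃ L : Subgroup G, L.Normal ∧ M < L ∧ L < N) →
      haveI := hM
      ∃ K : Subgroup (G ⧸ M), (N.map (QuotientGroup.mk' M)) ⊓ K = ⊥ ∧
        ∀ g : G ⧸ M, ∃ n ∈ N.map (QuotientGroup.mk' M), ∃ k ∈ K, g = n * k := by
  intro M N hM hN hMN hchief
  haveI := hM
  haveI := hN
  set f : G →* G ⧸ M := QuotientGroup.mk' M with hfdef
  have hfs : Function.Surjective f := QuotientGroup.mk'_surjective M
  by_cases hNtop : N = ⊤
  · subst hNtop
    refine ⟨⊥, by simp, fun g => ?_⟩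
    refine ⟨g, ?_, 1, Subgroup.one_mem ⊥, (mul_one g).symm⟩
    rw [Subgroup.map_top_of_surjective f hfs]
    exact Subgroup.mem_top g
  · have hNss := h2 N hNtop
    have hNsolv : Group.IsSolvable ↥N := hNss.isSolvable
    set Ab : Subgroup (G ⧸ M) := N.map f with hAb
    haveI hAbN : Ab.Normal := hN.map f hfs
    have hAbne : Ab ≠ ⊥ := by
      obtain ⟨x, hxN, hxM⟩ := SetLike.exists_of_lt hMN
      intro hbot
      have hmem : f x ∈ Ab := Subgroup.mem_map_of_mem f hxN
      rw [hbot, Subgroup.mem_bot] at hmem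
      apply hxM
      have : x ∈ MonoidHom.ker f := MonoidHom.mem_ker.mpr hmem
      rwa [hfdef, QuotientGroup.ker_mk'] at this
    have hmin : ∀ L : Subgroup (G ⧸ M), L.Normal → L ≤ Ab → L = ⊥ ∨ L = Ab := by
      intro L hLnorm hLA
      set Lc := L.comap f with hLc
      have hLcnorm : Lc.Normal := hLnorm.comap f
      have hMLc : M ≤ Lc := by
        intro x hx
        rw [hLc, Subgroup.mem_comap]
        have hker : x ∈ MonoidHom.ker f := by
          rw [hfdef, QuotientGroup.ker_mk']; exact hx
        rw [MonoidHom.mem_ker.mp hker]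
        exact L.one_mem
      have hLcN : Lc ≤ N := by
        have hcm : Lc ≤ (N.map f).comap f := Subgroup.comap_mono hLA
        rwa [Subgroup.comap_map_eq, hfdef, QuotientGroup.ker_mk',
          sup_eq_left.mpr hMN.le] at hcm
      by_cases hLM : Lc = M
      · left
        have heq : L = Lc.map f := (Subgroup.map_comap_eq_self_of_surjective hfs L).symm
        rw [heq, hLM, eq_bot_iff]
        intro y hy
        rw [Subgroup.mem_map] at hy
        obtain ⟨x, hxM, rfl⟩ := hy
        rw [Subgroup.mem_bot, hfdef]
        exact (QuotientGroup.eq_one_iff x).mpr hxM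
      · by_cases hLN : Lc = N
        · right
          have heq : L = Lc.map f := (Subgroup.map_comap_eq_self_of_surjective hfs L).symm
          rw [heq, hLN]
        · exact absurd ⟨Lc, hLcnorm, lt_of_le_of_ne hMLc (Ne.symm hLM),
            lt_of_le_of_ne hLcN hLN⟩ hchief
    have hAbsolv : Group.IsSolvable ↥Ab := by
      haveI := hNsolv
      let φN : ↥N →* ↥Ab :=
        (f.comp N.subtype).codRestrict Ab (fun x => Subgroup.mem_map_of_mem f x.2)
      have hsurj : Function.Surjective φN := by
        rintro ⟨y, hy⟩
        rw [hAb, Subgroup.mem_map] at hy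
        obtain ⟨x, hxN, hfx⟩ := hy
        exact ⟨⟨x, hxN⟩, Subtype.ext hfx⟩
      exact solvable_of_surjective hsurj
    have hcommbot : ⁅Ab, Ab⁆ = ⊥ := by
      rcases hmin ⁅Ab, Ab⁆ (Subgroup.commutator_normal Ab Ab)
        (Subgroup.commutator_le_left Ab Ab) with h | h
      · exact h
      · exfalso
        have hall : ∀ k : ℕ, (derivedSeries ↥Ab k).map Ab.subtype = Ab := by
          intro k
          induction k with
          | zero =>
            show ((⊤ : Subgroup ↥Ab)).map Ab.subtype = Ab
            rw [← MonoidHom.range_eq_map, Subgroup.range_subtype]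
          | succ k ih =>
            show (⁅derivedSeries ↥Ab k, derivedSeries ↥Ab k⁆ : Subgroup ↥Ab).map Ab.subtype = Ab
            rw [Subgroup.map_commutator, ih, h]
        obtain ⟨nn, hnn⟩ := Group.IsSolvable.solvable (G := ↥Ab)
        have hc := hall nn
        rw [hnn, Subgroup.map_bot] at hc
        exact hAbne hc.symm
    have hAbcomm : ∀ x ∈ Ab, ∀ y ∈ Ab, x * y = y * x := by
      intro x hx y hy
      have hmem := Subgroup.commutator_mem_commutator hx hy
      rw [hcommbot, Subgroup.mem_bot] at hmem
      exact commutatorElement_eq_one_iff_mul_comm.mp hmem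
    have hcardne : Nat.card ↥Ab ≠ 1 := fun h => hAbne (Subgroup.card_eq_one.mp h)
    obtain ⟨p, hp, hpdvd⟩ := Nat.exists_prime_and_dvd hcardne
    haveI : Fact p.Prime := ⟨hp⟩
    have hexpA : ∀ x ∈ Ab, x ^ p = 1 := by
      let T : Subgroup (G ⧸ M) :=
        { carrier := {x | x ∈ Ab ∧ x ^ p = 1}
          one_mem' := ⟨Ab.one_mem, one_pow p⟩
          mul_mem' := by
            rintro x y ⟨hx, hx1⟩ ⟨hy, hy1⟩
            refine ⟨Ab.mul_mem hx hy, ?_⟩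
            have hxy : Commute x y := hAbcomm x hx y hy
            rw [hxy.mul_pow, hx1, hy1, one_mul]
          inv_mem' := by
            rintro x ⟨hx, hx1⟩
            exact ⟨Ab.inv_mem hx, by rw [inv_pow, hx1, inv_one]⟩ }
      have hTnorm : T.Normal := by
        constructor
        rintro x ⟨hx, hx1⟩ g
        refine ⟨hAbN.conj_mem x hx g, ?_⟩
        rw [show g * x * g⁻¹ = MulAut.conj g x from rfl, ← map_pow, hx1, map_one]
      have hTle : T ≤ Ab := fun x hx => hx.1
      have hTne : T ≠ ⊥ := by
        obtain ⟨x, hx⟩ := exists_prime_orderOf_dvd_card' (G := ↥Ab) p hpdvd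
        intro hbot
        have hxp : (↑x : G ⧸ M) ^ p = 1 := by
          have hpw := pow_orderOf_eq_one x
          rw [hx] at hpw
          calc (↑x : G ⧸ M) ^ p = ↑(x ^ p) := by norm_cast
            _ = 1 := by rw [hpw]; rfl
        have hxT : (↑x : G ⧸ M) ∈ T := ⟨x.2, hxp⟩
        rw [hbot, Subgroup.mem_bot] at hxT
        have hx1 : x = 1 := Subtype.ext hxT
        rw [hx1, orderOf_one] at hx
        exact hp.ne_one hx.symm
      have hTA : T = Ab := (hmin T hTnorm hTle).resolve_left hTne
      intro x hx
      rw [← hTA] at hx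
      exact hx.2
    have hpA : IsPGroup p ↥Ab := by
      intro a
      refine ⟨1, ?_⟩
      rw [pow_one]
      apply Subtype.ext
      calc ((a ^ p : ↥Ab) : G ⧸ M) = (↑a : G ⧸ M) ^ p := by norm_cast
        _ = 1 := hexpA ↑a a.2
    obtain ⟨Q, hAQ⟩ := hpA.exists_le_sylow
    obtain ⟨S, hS⟩ := Sylow.mapSurjective_surjective hfs p Q
    have hQeq : (Q : Subgroup (G ⧸ M)) = Subgroup.map f (S : Subgroup G) := by
      rw [← hS]; rfl
    obtain ⟨hSp, hScomm, hSexp⟩ := h3 p hp S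
    have hQcomm : ∀ x ∈ (Q : Subgroup (G ⧸ M)), ∀ y ∈ (Q : Subgroup (G ⧸ M)),
        x * y = y * x := by
      intro x hx y hy
      rw [hQeq, Subgroup.mem_map] at hx hy
      obtain ⟨a, haS, rfl⟩ := hx
      obtain ⟨b, hbS, rfl⟩ := hy
      rw [← map_mul, ← map_mul]
      congr 1
      exact congrArg Subtype.val (hScomm ⟨a, haS⟩ ⟨b, hbS⟩)
    have hQexp : ∀ x ∈ (Q : Subgroup (G ⧸ M)), x ^ p = 1 := by
      intro x hx
      rw [hQeq, Subgroup.mem_map] at hx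
      obtain ⟨a, haS, rfl⟩ := hx
      rw [← map_pow]
      have ha : a ^ p = 1 := congrArg Subtype.val (hSexp ⟨a, haS⟩)
      rw [ha, map_one]
    obtain ⟨k, hk⟩ := IsPGroup.iff_card.mp hpA
    have hcop : Nat.Coprime (Q : Subgroup (G ⧸ M)).index (Nat.card ↥Ab) := by
      have hnd : ¬ p ∣ (Q : Subgroup (G ⧸ M)).index := Q.not_dvd_index
      have hco1 : Nat.Coprime p (Q : Subgroup (G ⧸ M)).index :=
        (hp.coprime_iff_not_dvd).mpr hnd
      rw [hk]
      exact Nat.Coprime.pow_right k hco1.symm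
    letI cQ : CommGroup ↥(Q : Subgroup (G ⧸ M)) :=
      { (inferInstance : Group ↥(Q : Subgroup (G ⧸ M))) with
        mul_comm := fun a b => Subtype.ext (hQcomm _ a.2 _ b.2) }
    have hQexp' : ∀ v : ↥(Q : Subgroup (G ⧸ M)), v ^ p = 1 := by
      intro v
      apply Subtype.ext
      calc ((v ^ p : ↥(Q : Subgroup (G ⧸ M))) : G ⧸ M) = (↑v : G ⧸ M) ^ p := by norm_cast
        _ = 1 := hQexp ↑v v.2
    obtain ⟨K', hK'1, hK'2⟩ := elab_compl hp hQexp' (Ab.subgroupOf Q)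
    set K0 : Subgroup (G ⧸ M) := K'.map (Q : Subgroup (G ⧸ M)).subtype with hK0def
    have hK0Q : K0 ≤ (Q : Subgroup (G ⧸ M)) := by
      rw [hK0def]; exact Subgroup.map_subtype_le K'
    have hAbK0 : Ab ⊓ K0 = ⊥ := by
      rw [eq_bot_iff]
      intro x hx
      rw [Subgroup.mem_inf] at hx
      obtain ⟨hxA, hxK⟩ := hx
      rw [hK0def, Subgroup.mem_map] at hxK
      obtain ⟨y, hyK', rfl⟩ := hxK
      have hyA : y ∈ Ab.subgroupOf Q := Subgroup.mem_subgroupOf.mpr hxA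
      have hy : y ∈ Ab.subgroupOf Q ⊓ K' := by
        rw [Subgroup.mem_inf]; exact ⟨hyA, hyK'⟩
      rw [hK'1, Subgroup.mem_bot] at hy
      rw [Subgroup.mem_bot, hy]
      rfl
    have hgen : ∀ x ∈ (Q : Subgroup (G ⧸ M)), ∃ a ∈ Ab, ∃ k0 ∈ K0, x = a * k0 := by
      intro x hx
      have hxtop : (⟨x, hx⟩ : ↥(Q : Subgroup (G ⧸ M))) ∈ Ab.subgroupOf Q ⊔ K' := by
        rw [hK'2]; trivial
      rw [Subgroup.mem_sup] at hxtop
      obtain ⟨y, hy, z, hz, hyz⟩ := hxtop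
      refine ⟨↑y, Subgroup.mem_subgroupOf.mp hy, ↑z, Subgroup.mem_map_of_mem _ hz, ?_⟩
      have : (↑(y * z) : G ⧸ M) = x := by rw [hyz]
      rw [← this]
      rfl
    obtain ⟨K, hKa, hKb⟩ := gaschutz_aux Ab (Q : Subgroup (G ⧸ M)) hAbN hAQ hQcomm hcop
      K0 hK0Q hAbK0 hgen
    exact ⟨K, hKa, hKb⟩
end

section
/- Let k be a field, n a natural number, V = k^n, and U_1 ⊊ U_2 subspaces of V. Let m be the largest element of I(U_2) \ I(U_1) (this set is nonempty). Then there exists a unique subspace W with U_1 ⊆ W ⊆ U_2 and I(W) = I(U_1) ∪ {m}. -/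
/-- The subspace of row vectors in `k^n` whose first `i` coordinates
(the coordinates of index `< i`, i.e. the coordinates numbered `1, …, i` in
one-based numbering) vanish. -/
def lowCoordsZero (k : Type*) [Field k] (n : ℕ) (i : ℕ) : Submodule k (Fin n → k) where
  carrier := {v | ∀ j : Fin n, (j : ℕ) < i → v j = 0}
  add_mem' := by
    intro a b ha hb j hj
    simp [Pi.add_apply, ha j hj, hb j hj]
  zero_mem' := fun j _ => rfl
  smul_mem' := by
    intro c a ha j hj
    simp [Pi.smul_apply, ha j hj]

/-- The pivot set of a subspace `U ⊆ k^n`: coordinate `i` is a pivot when intersecting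
`U` with the subspace of vectors vanishing in coordinates `≤ i` is a proper cut compared
with vanishing in coordinates `< i`.  This is the set of pivot columns of the reduced
row echelon form of any matrix whose rows generate `U`. -/
def pivotSet {k : Type*} [Field k] {n : ℕ} (U : Submodule k (Fin n → k)) : Set (Fin n) :=
  {i : Fin n | U ⊓ lowCoordsZero k n i ≠ U ⊓ lowCoordsZero k n ((i : ℕ) + 1)}

/-!
The candidate is `W = U₁ ⊔ (U₂ ∩ V_m)`. A subspace contained in another one with the same pivot
set equals it (clear the pivot coordinates from right to left), so everything reduces to computing
pivot sets. Adding vectors of `V_m` creates no pivot left of `m`; pivots right of `m` are pivots of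
`U₂` and hence, by maximality of `m`, already pivots of `U₁`. For uniqueness, `m` is a pivot of any
such `W`, so its subspace `U₁ ⊔ (W ∩ V_m)` has the same pivot set and thus equals `W`; hence `W`
lies in `U₁ ⊔ (U₂ ∩ V_m)`, which again has the same pivot set as `W`.
-/

section

variable {k : Type*} [Field k] {n : ℕ}

lemma mem_lowCoordsZero {i : ℕ} {v : Fin n → k} :
    v ∈ lowCoordsZero k n i ↔ ∀ j : Fin n, (j : ℕ) < i → v j = 0 := Iff.rfl

lemma lowCoordsZero_antitone : Antitone (lowCoordsZero k n) :=
  fun _ _ hij _ hv j hj => hv j (lt_of_lt_of_le hj hij)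

lemma lowCoordsZero_eq_bot {i : ℕ} (hi : n ≤ i) : lowCoordsZero k n i = ⊥ :=
  (Submodule.eq_bot_iff _).2 fun v hv => funext fun j => hv j (by omega)

lemma mem_lowCoordsZero_succ (i : Fin n) {v : Fin n → k} :
    v ∈ lowCoordsZero k n (i + 1) ↔ v ∈ lowCoordsZero k n i ∧ v i = 0 := by
  simp only [mem_lowCoordsZero, Nat.lt_succ_iff_lt_or_eq, or_imp, forall_and]
  refine and_congr_right fun _ => ⟨fun h => h i rfl, fun h j hj => ?_⟩
  rwa [Fin.ext hj]

lemma mem_pivotSet_iff (U : Submodule k (Fin n → k)) (i : Fin n) :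
    i ∈ pivotSet U ↔ ∃ v ∈ U, v ∈ lowCoordsZero k n i ∧ v i ≠ 0 := by
  have hle : U ⊓ lowCoordsZero k n (i + 1) ≤ U ⊓ lowCoordsZero k n i :=
    inf_le_inf_left U (lowCoordsZero_antitone (Nat.le_succ i))
  change _ ≠ _ ↔ _
  rw [ne_comm, ← hle.lt_iff_ne, SetLike.lt_iff_le_and_exists]
  simp only [hle, true_and, Submodule.mem_inf, mem_lowCoordsZero_succ]
  exact exists_congr fun v => by tauto

lemma pivotSet_mono {A B : Submodule k (Fin n → k)} (hAB : A ≤ B) : pivotSet A ⊆ pivotSet B := by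
  intro i hi
  obtain ⟨v, hv, hvi, hv0⟩ := (mem_pivotSet_iff A i).1 hi
  exact (mem_pivotSet_iff B i).2 ⟨v, hAB hv, hvi, hv0⟩

lemma inf_lowCoordsZero_le_of_succ {A B : Submodule k (Fin n → k)} (hAB : A ≤ B) (i : Fin n)
    (hi : i ∈ pivotSet B → i ∈ pivotSet A) (hsucc : B ⊓ lowCoordsZero k n (i + 1) ≤ A) :
    B ⊓ lowCoordsZero k n i ≤ A := by
  rintro v ⟨hvB, hvi⟩
  by_cases hv0 : v i = 0
  · exact hsucc ⟨hvB, (mem_lowCoordsZero_succ i).2 ⟨hvi, hv0⟩⟩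
  obtain ⟨a, haA, hai, ha0⟩ :=
    (mem_pivotSet_iff A i).1 (hi ((mem_pivotSet_iff B i).2 ⟨v, hvB, hvi, hv0⟩))
  set c := v i / a i
  have hw : v - c • a ∈ A := hsucc ⟨B.sub_mem hvB (B.smul_mem c (hAB haA)),
    (mem_lowCoordsZero_succ i).2 ⟨sub_mem hvi (Submodule.smul_mem _ c hai), by simp [c, ha0]⟩⟩
  simpa using A.add_mem hw (A.smul_mem c haA)

lemma inf_lowCoordsZero_le_of_pivotSet_subset {A B : Submodule k (Fin n → k)} (hAB : A ≤ B)
    (hpiv : pivotSet B ⊆ pivotSet A) (i : ℕ) : B ⊓ lowCoordsZero k n i ≤ A := by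
  by_cases hi : n ≤ i
  · simp [lowCoordsZero_eq_bot hi]
  · exact inf_lowCoordsZero_le_of_succ hAB ⟨i, by omega⟩ (fun h => hpiv h)
      (inf_lowCoordsZero_le_of_pivotSet_subset hAB hpiv (i + 1))
termination_by n - i

lemma eq_of_le_of_pivotSet_subset {A B : Submodule k (Fin n → k)} (hAB : A ≤ B)
    (hpiv : pivotSet B ⊆ pivotSet A) : A = B := by
  refine hAB.antisymm fun v hv => inf_lowCoordsZero_le_of_pivotSet_subset hAB hpiv 0 ⟨hv, ?_⟩
  exact fun j hj => absurd hj (Nat.not_lt_zero _)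

lemma mem_pivotSet_of_mem_pivotSet_sup {A B : Submodule k (Fin n → k)} {m : ℕ}
    (hB : B ≤ lowCoordsZero k n m) {i : Fin n} (him : (i : ℕ) < m) (hi : i ∈ pivotSet (A ⊔ B)) :
    i ∈ pivotSet A := by
  obtain ⟨x, hx, hxi, hx0⟩ := (mem_pivotSet_iff _ i).1 hi
  obtain ⟨a, ha, b, hb, rfl⟩ := Submodule.mem_sup.1 hx
  have hbi := (mem_lowCoordsZero_succ i).1 (lowCoordsZero_antitone him (hB hb))
  refine (mem_pivotSet_iff A i).2 ⟨a, ha, ?_, ?_⟩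
  · simpa using sub_mem hxi hbi.1
  · simpa [hbi.2] using hx0

lemma pivotSet_union_singleton_subset {A W : Submodule k (Fin n → k)} {m : Fin n}
    (hm : m ∈ pivotSet W) : pivotSet A ∪ {m} ⊆ pivotSet (A ⊔ W ⊓ lowCoordsZero k n m) := by
  refine Set.union_subset (pivotSet_mono le_sup_left) (Set.singleton_subset_iff.2 ?_)
  obtain ⟨v, hv, hvm, hv0⟩ := (mem_pivotSet_iff W m).1 hm
  exact (mem_pivotSet_iff _ m).2 ⟨v, Submodule.mem_sup_right ⟨hv, hvm⟩, hvm, hv0⟩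

lemma pivotSet_sup_inf_subset {U₁ U₂ : Submodule k (Fin n → k)} (hU : U₁ ≤ U₂) {m : Fin n}
    (hmax : ∀ i ∈ pivotSet U₂ \ pivotSet U₁, i ≤ m) :
    pivotSet (U₁ ⊔ U₂ ⊓ lowCoordsZero k n m) ⊆ pivotSet U₁ ∪ {m} := by
  intro i hi
  rcases lt_trichotomy i m with him | rfl | him
  · exact Or.inl (mem_pivotSet_of_mem_pivotSet_sup inf_le_right him hi)
  · exact Or.inr rfl
  · by_contra hi₁
    have hi₂ : i ∈ pivotSet U₂ := pivotSet_mono (sup_le hU inf_le_left) hi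
    exact (hmax i ⟨hi₂, fun h => hi₁ (Or.inl h)⟩).not_gt him

end

/-- If `U₁ ⊊ U₂` and `m` is the largest pivot of `U₂` that is not a pivot of `U₁`, then
there is a unique intermediate subspace `W` with `I(W) = I(U₁) ∪ {m}`. -/
theorem existsUnique_intermediate_pivotSet_insert_max (k : Type*) [Field k] (n : ℕ)
    (U₁ U₂ : Submodule k (Fin n → k)) (h : U₁ < U₂) (m : Fin n)
    (hm : m ∈ pivotSet U₂ \ pivotSet U₁)
    (hmax : ∀ i ∈ pivotSet U₂ \ pivotSet U₁, i ≤ m) :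
    ∃! W : Submodule k (Fin n → k),
      U₁ ≤ W ∧ W ≤ U₂ ∧ pivotSet W = pivotSet U₁ ∪ {m} := by
  set C := U₁ ⊔ U₂ ⊓ lowCoordsZero k n m
  have hC : pivotSet C = pivotSet U₁ ∪ {m} :=
    (pivotSet_sup_inf_subset h.le hmax).antisymm (pivotSet_union_singleton_subset hm.1)
  refine ⟨C, ⟨le_sup_left, sup_le h.le inf_le_left, hC⟩, ?_⟩
  rintro W ⟨hW₁, hW₂, hW⟩
  have hmW : m ∈ pivotSet W := hW ▸ Or.inr rfl
  have hW_eq : U₁ ⊔ W ⊓ lowCoordsZero k n m = W :=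
    eq_of_le_of_pivotSet_subset (sup_le hW₁ inf_le_left) (hW ▸ pivotSet_union_singleton_subset hmW)
  have hWC : W ≤ C := hW_eq ▸ sup_le_sup_left (inf_le_inf_right _ hW₂) U₁
  exact eq_of_le_of_pivotSet_subset hWC (hC.trans hW.symm).subset
end

section
/- Let k be a field, n a natural number, V = k^n, and U_1 ⊊ U_2 subspaces of V. Let j be the smallest element of I(U_2) \ I(U_1) (this set is nonempty). Then there exists a unique subspace W with U_1 ⊆ W ⊆ U_2 and I(W) = I(U_2) \ {j}. -/
namespace PivotAux
open scoped Classical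
set_option synthInstance.maxHeartbeats 1000000
set_option maxHeartbeats 1000000

variable {k : Type*} [Field k] {n : ℕ}

lemma mem_low {v : Fin n → k} {i : ℕ} :
    v ∈ lowCoordsZero k n i ↔ ∀ j : Fin n, (j : ℕ) < i → v j = 0 := Iff.rfl

lemma low_anti {i i' : ℕ} (h : i ≤ i') : lowCoordsZero k n i' ≤ lowCoordsZero k n i :=
  fun v hv j hj => hv j (lt_of_lt_of_le hj h)

lemma mem_pivot_iff {U : Submodule k (Fin n → k)} {i : Fin n} :
    i ∈ pivotSet U ↔ ∃ v ∈ U, v i ≠ 0 ∧ ∀ l : Fin n, (l : ℕ) < (i : ℕ) → v l = 0 := by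
  have hle : U ⊓ lowCoordsZero k n ((i : ℕ) + 1) ≤ U ⊓ lowCoordsZero k n i :=
    inf_le_inf_left _ (low_anti (Nat.le_succ _))
  constructor
  · intro hi
    have : ¬ (U ⊓ lowCoordsZero k n i ≤ U ⊓ lowCoordsZero k n ((i : ℕ) + 1)) := by
      intro hle2
      exact hi (le_antisymm hle2 hle)
    obtain ⟨v, hv1, hv2⟩ := SetLike.not_le_iff_exists.mp this
    refine ⟨v, hv1.1, ?_, fun l hl => hv1.2 l hl⟩
    intro hvi
    exact hv2 ⟨hv1.1, fun l hl => by
      rcases Nat.lt_succ_iff_lt_or_eq.mp hl with h' | h'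
      · exact hv1.2 l h'
      · have : l = i := Fin.ext h'
        rw [this]; exact hvi⟩
  · rintro ⟨v, hvU, hvi, hvl⟩ heq
    have : v ∈ U ⊓ lowCoordsZero k n ((i : ℕ) + 1) := heq ▸ ⟨hvU, hvl⟩
    exact hvi (this.2 i (Nat.lt_succ_self _))

lemma pivot_mono {U U' : Submodule k (Fin n → k)} (h : U ≤ U') :
    pivotSet U ⊆ pivotSet U' := by
  intro i hi
  rw [mem_pivot_iff] at hi ⊢
  obtain ⟨v, hvU, hvi, hvl⟩ := hi
  exact ⟨v, h hvU, hvi, hvl⟩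

lemma low_of_ge {i : ℕ} (h : n ≤ i) : lowCoordsZero k n i = ⊥ := by
  apply le_antisymm
  · intro v hv
    have : v = 0 := funext fun l => hv l (lt_of_lt_of_le l.isLt h)
    simp [this]
  · exact bot_le

open Module

lemma step (U : Submodule k (Fin n → k)) {i : ℕ} (hi : i < n) :
    finrank k ↥(U ⊓ lowCoordsZero k n i) =
      finrank k ↥(U ⊓ lowCoordsZero k n (i+1)) +
        (if (⟨i, hi⟩ : Fin n) ∈ pivotSet U then 1 else 0) := by
  set fi : Fin n := ⟨i, hi⟩
  set A := U ⊓ lowCoordsZero k n i with hA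
  set B := U ⊓ lowCoordsZero k n (i+1) with hB
  have hle : B ≤ A := inf_le_inf_left _ (low_anti (Nat.le_succ _))
  set φ : A →ₗ[k] k := (LinearMap.proj fi).comp A.subtype with hφ
  have hker : LinearMap.ker φ = (B.comap A.subtype) := by
    ext ⟨v, hv⟩
    simp only [LinearMap.mem_ker, hφ, LinearMap.comp_apply, Submodule.subtype_apply,
      LinearMap.proj_apply, Submodule.mem_comap]
    constructor
    · intro h0
      refine ⟨hv.1, fun l hl => ?_⟩
      rcases Nat.lt_succ_iff_lt_or_eq.mp hl with h' | h'
      · exact hv.2 l h'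
      · have : l = fi := Fin.ext h'
        rw [this]; exact h0
    · intro hB'
      exact hB'.2 fi (Nat.lt_succ_self _)
  have hrn := LinearMap.finrank_range_add_finrank_ker φ
  have hkerrank : finrank k ↥(LinearMap.ker φ) = finrank k ↥B := by
    rw [hker]
    exact (Submodule.comapSubtypeEquivOfLe hle).finrank_eq
  by_cases hp : fi ∈ pivotSet U
  · rw [if_pos hp]
    have hrange : LinearMap.range φ = ⊤ := by
      obtain ⟨v, hvU, hvi, hvl⟩ := mem_pivot_iff.mp hp
      have hvA : v ∈ A := ⟨hvU, fun l hl => hvl l hl⟩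
      rw [eq_top_iff]
      intro c _
      refine ⟨(c / v fi) • ⟨v, hvA⟩, ?_⟩
      simp only [hφ, LinearMap.comp_apply, map_smul, Submodule.subtype_apply,
        LinearMap.proj_apply]
      field_simp
      exact div_mul_cancel₀ c hvi
    rw [hrange] at hrn
    rw [← hrn, hkerrank, finrank_top, finrank_self]
    omega
  · rw [if_neg hp]
    have heq : A = B := by
      have : ¬ (U ⊓ lowCoordsZero k n (fi : ℕ) ≠ U ⊓ lowCoordsZero k n ((fi : ℕ) + 1)) := hp
      simpa using not_not.mp this
    rw [heq, Nat.add_zero]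

lemma ncard_step (U : Submodule k (Fin n → k)) {i : ℕ} (hi : i < n) :
    (pivotSet U ∩ {l : Fin n | i ≤ (l : ℕ)}).ncard =
      (pivotSet U ∩ {l : Fin n | i + 1 ≤ (l : ℕ)}).ncard +
        (if (⟨i, hi⟩ : Fin n) ∈ pivotSet U then 1 else 0) := by
  set fi : Fin n := ⟨i, hi⟩
  by_cases hp : fi ∈ pivotSet U
  · rw [if_pos hp]
    have hset : pivotSet U ∩ {l : Fin n | i ≤ (l : ℕ)} =
        insert fi (pivotSet U ∩ {l : Fin n | i + 1 ≤ (l : ℕ)}) := by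
      ext l
      simp only [Set.mem_inter_iff, Set.mem_setOf_eq, Set.mem_insert_iff]
      constructor
      · rintro ⟨hl, hil⟩
        rcases eq_or_lt_of_le hil with h' | h'
        · exact Or.inl (Fin.ext h'.symm)
        · exact Or.inr ⟨hl, h'⟩
      · rintro (rfl | ⟨hl, hil⟩)
        · exact ⟨hp, le_refl _⟩
        · exact ⟨hl, le_trans (Nat.le_succ _) hil⟩
    rw [hset, Set.ncard_insert_of_notMem (by simp [fi]) (Set.toFinite _)]
  · rw [if_neg hp, Nat.add_zero]
    congr 1
    ext l
    simp only [Set.mem_inter_iff, Set.mem_setOf_eq]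
    constructor
    · rintro ⟨hl, hil⟩
      rcases eq_or_lt_of_le hil with h' | h'
      · exfalso
        have hlfi : l = fi := Fin.ext h'.symm
        rw [hlfi] at hl
        exact hp hl
      · exact ⟨hl, h'⟩
    · rintro ⟨hl, hil⟩
      exact ⟨hl, le_trans (Nat.le_succ _) hil⟩

lemma high_empty (U : Submodule k (Fin n → k)) {i : ℕ} (h : n ≤ i) :
    pivotSet U ∩ {l : Fin n | i ≤ (l : ℕ)} = ∅ := by
  ext l
  simp only [Set.mem_inter_iff, Set.mem_setOf_eq, Set.mem_empty_iff_false, iff_false]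
  rintro ⟨-, hil⟩
  have := l.isLt
  omega

lemma finrank_inter_aux (U : Submodule k (Fin n → k)) :
    ∀ m (i : ℕ), n ≤ i + m →
      finrank k ↥(U ⊓ lowCoordsZero k n i) =
        (pivotSet U ∩ {l : Fin n | i ≤ (l : ℕ)}).ncard := by
  intro m
  induction m with
  | zero =>
    intro i hni
    rw [low_of_ge (by omega), inf_bot_eq, high_empty U (by omega), Set.ncard_empty,
      finrank_bot]
  | succ m ih =>
    intro i hni
    by_cases hi : i < n
    · rw [step U hi, ncard_step U hi, ih (i+1) (by omega)]
    · rw [low_of_ge (by omega), inf_bot_eq, high_empty U (by omega), Set.ncard_empty,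
        finrank_bot]

lemma finrank_inter (U : Submodule k (Fin n → k)) (i : ℕ) :
    finrank k ↥(U ⊓ lowCoordsZero k n i) =
      (pivotSet U ∩ {l : Fin n | i ≤ (l : ℕ)}).ncard :=
  finrank_inter_aux U n i (by omega)

lemma low_zero_top : lowCoordsZero k n 0 = ⊤ := by
  rw [eq_top_iff]; intro v _ l hl; omega

lemma finrank_eq_ncard (U : Submodule k (Fin n → k)) :
    finrank k ↥U = (pivotSet U).ncard := by
  have := finrank_inter U 0
  rw [low_zero_top, inf_top_eq] at this
  rw [this]
  congr 1
  ext l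
  simp

end PivotAux

/-- If `U₁ ⊊ U₂` and `j` is the smallest pivot of `U₂` that is not a pivot of `U₁`, then
there is a unique intermediate subspace `W` with `I(W) = I(U₂) \ {j}`. -/
theorem existsUnique_intermediate_pivotSet_erase_min (k : Type*) [Field k] (n : ℕ)
    (U₁ U₂ : Submodule k (Fin n → k)) (h : U₁ < U₂) (j : Fin n)
    (hj : j ∈ pivotSet U₂ \ pivotSet U₁)
    (hmin : ∀ i ∈ pivotSet U₂ \ pivotSet U₁, j ≤ i) :
    ∃! W : Submodule k (Fin n → k),
      U₁ ≤ W ∧ W ≤ U₂ ∧ pivotSet W = pivotSet U₂ \ {j} := by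
  classical
  obtain ⟨hj2, hj1⟩ := hj
  set W := U₁ ⊔ (U₂ ⊓ lowCoordsZero k n ((j : ℕ) + 1)) with hWdef
  have hU12 : U₁ ≤ U₂ := h.le
  have hWle : W ≤ U₂ := sup_le hU12 inf_le_left
  have hU1W : U₁ ≤ W := le_sup_left
  have hpiv : pivotSet W = pivotSet U₂ \ {j} := by
    apply Set.Subset.antisymm
    · intro i hi
      refine ⟨PivotAux.pivot_mono hWle hi, ?_⟩
      simp only [Set.mem_singleton_iff]
      rintro rfl
      obtain ⟨v, hvW, hvi, hvl⟩ := PivotAux.mem_pivot_iff.mp hi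
      obtain ⟨a, ha, b, hb, hab⟩ := Submodule.mem_sup.mp hvW
      apply hj1
      rw [PivotAux.mem_pivot_iff]
      have hbz : ∀ l : Fin n, (l : ℕ) ≤ (i : ℕ) → b l = 0 := fun l hl =>
        hb.2 l (by omega)
      refine ⟨a, ha, ?_, ?_⟩
      · have h1 : a i + b i = v i := congrFun hab i
        rw [hbz i le_rfl, add_zero] at h1
        rw [h1]; exact hvi
      · intro l hl
        have h1 : a l + b l = v l := congrFun hab l
        rw [hbz l (le_of_lt hl), add_zero, hvl l hl] at h1
        exact h1
    · rintro i ⟨hi2, hij⟩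
      simp only [Set.mem_singleton_iff] at hij
      rcases lt_trichotomy i j with hlt | heq | hgt
      · have hi1 : i ∈ pivotSet U₁ := by
          by_contra hni
          exact absurd (hmin i ⟨hi2, hni⟩) (not_le_of_gt hlt)
        exact PivotAux.pivot_mono hU1W hi1
      · exact absurd heq hij
      · obtain ⟨v, hvU, hvi, hvl⟩ := PivotAux.mem_pivot_iff.mp hi2
        have hvF : v ∈ lowCoordsZero k n ((j : ℕ) + 1) := by
          intro l hl
          exact hvl l (by have := Fin.lt_iff_val_lt_val.mp hgt; omega)
        have hvW : v ∈ W := le_sup_right (a := U₁) ⟨hvU, hvF⟩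
        exact PivotAux.mem_pivot_iff.mpr ⟨v, hvW, hvi, hvl⟩
  refine ⟨W, ⟨hU1W, hWle, hpiv⟩, ?_⟩
  rintro W' ⟨hU1W', hW'U2, hpiv'⟩
  have hfr : Module.finrank k ↥(W' ⊓ lowCoordsZero k n ((j : ℕ) + 1)) =
      Module.finrank k ↥(U₂ ⊓ lowCoordsZero k n ((j : ℕ) + 1)) := by
    rw [PivotAux.finrank_inter, PivotAux.finrank_inter]
    congr 1
    rw [hpiv']
    ext l
    simp only [Set.mem_inter_iff, Set.mem_diff, Set.mem_setOf_eq, Set.mem_singleton_iff]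
    constructor
    · rintro ⟨⟨hl, -⟩, hjl⟩
      exact ⟨hl, hjl⟩
    · rintro ⟨hl, hjl⟩
      refine ⟨⟨hl, ?_⟩, hjl⟩
      intro hlj
      rw [hlj] at hjl
      omega
  have hsub : W' ⊓ lowCoordsZero k n ((j : ℕ) + 1) ≤
      U₂ ⊓ lowCoordsZero k n ((j : ℕ) + 1) := inf_le_inf_right _ hW'U2
  have heq2 : W' ⊓ lowCoordsZero k n ((j : ℕ) + 1) =
      U₂ ⊓ lowCoordsZero k n ((j : ℕ) + 1) :=
    Submodule.eq_of_le_of_finrank_le hsub (le_of_eq hfr.symm)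
  have hFW' : U₂ ⊓ lowCoordsZero k n ((j : ℕ) + 1) ≤ W' := by
    rw [← heq2]; exact inf_le_left
  have hWW' : W ≤ W' := sup_le hU1W' hFW'
  have hfr2 : Module.finrank k ↥W' ≤ Module.finrank k ↥W := by
    rw [PivotAux.finrank_eq_ncard, PivotAux.finrank_eq_ncard, hpiv, hpiv']
  exact (Submodule.eq_of_le_of_finrank_le hWW' hfr2).symm
end

section
/- Let G = G_1 × ⋯ × G_r be a direct product of finite groups, p a prime, and H a subgroup of G. For 1 ≤ j ≤ r+1 let N_j denote the normal subgroup of G consisting of all tuples whose components in the first j−1 coordinates are trivial (so N_1 = G and N_{r+1} = 1). Then for any two Sylow p-subgroups P and Q of H, the sets { j ∈ {1,…,r} : P ∩ N_j ≠ P ∩ N_{j+1} } and { j ∈ {1,…,r} : Q ∩ N_j ≠ Q ∩ N_{j+1} } are equal. (Hence the invariant I^p(H) given by this set is well-defined, independent of the choice of Sylow p-subgroup of H.) -/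
/-- In a direct product `G₁ × ⋯ × Gᵣ`, the (normal) subgroup of tuples whose first `j`
components (those of index `< j`) are trivial. -/
def firstCoordsTrivial {r : ℕ} (Gs : Fin r → Type*) [∀ i, Group (Gs i)] (j : ℕ) :
    Subgroup (∀ i, Gs i) where
  carrier := {g | ∀ i : Fin r, (i : ℕ) < j → g i = 1}
  one_mem' := fun _ _ => rfl
  mul_mem' := by
    intro a b ha hb i hi
    simp [Pi.mul_apply, ha i hi, hb i hi]
  inv_mem' := by
    intro a ha i hi
    simp [Pi.inv_apply, ha i hi]

/-!
Any two Sylow `p`-subgroups of `H` are conjugate by an element `g ∈ H`, so their images in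
`G` are conjugate by `g`. Each `N_j` is normal, so conjugation by `g` maps `P ∩ N_j` to
`gPg⁻¹ ∩ N_j`; being a bijection on subgroups, it preserves which consecutive intersections
coincide.
-/

open Pointwise

instance firstCoordsTrivial_normal {r : ℕ} (Gs : Fin r → Type*) [∀ i, Group (Gs i)] (j : ℕ) :
    (firstCoordsTrivial Gs j).Normal where
  conj_mem n hn g i hi := by simp [hn i hi]

namespace Subgroup

variable {G : Type*} [Group G]

theorem conj_smul_inf_eq_iff (g : G) (K N M : Subgroup G) [N.Normal] [M.Normal] :
    MulAut.conj g • K ⊓ N = MulAut.conj g • K ⊓ M ↔ K ⊓ N = K ⊓ M := by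
  conv_lhs => rw [← Normal.conj_smul_eq_self g N, ← Normal.conj_smul_eq_self g M,
    ← smul_inf, ← smul_inf]
  exact smul_left_cancel_iff _

theorem map_subtype_conj_smul {H : Subgroup G} (h : H) (K : Subgroup H) :
    (MulAut.conj h • K).map H.subtype = MulAut.conj (h : G) • K.map H.subtype := by
  refine le_antisymm ?_ ?_
  · rintro - ⟨-, ⟨k, hk, rfl⟩, rfl⟩
    exact ⟨k, ⟨k, hk, rfl⟩, rfl⟩
  · rintro - ⟨-, ⟨k, hk, rfl⟩, rfl⟩
    exact ⟨_, ⟨k, hk, rfl⟩, rfl⟩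

end Subgroup

theorem Sylow.exists_map_subtype_eq_conj_smul {G : Type*} [Group G] {p : ℕ} [Fact p.Prime]
    {H : Subgroup G} [Finite H] (P Q : Sylow p H) :
    ∃ g : G, (Q : Subgroup H).map H.subtype = MulAut.conj g • (P : Subgroup H).map H.subtype := by
  obtain ⟨h, rfl⟩ := MulAction.exists_smul_eq H P Q
  exact ⟨h, Subgroup.map_subtype_conj_smul h P⟩

/-- The set of "pivot coordinates" of a Sylow `p`-subgroup of a subgroup `H` of a direct
product of finite groups does not depend on the choice of the Sylow subgroup; hence the
invariant `Iᵖ(H)` is well-defined. -/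
theorem pivot_coords_independent_of_sylow
    {r : ℕ} (Gs : Fin r → Type*) [∀ i, Group (Gs i)] [∀ i, Finite (Gs i)]
    (p : ℕ) (hp : p.Prime) (H : Subgroup (∀ i, Gs i)) (P Q : Sylow p H) :
    {j : Fin r | ((P : Subgroup H).map H.subtype) ⊓ firstCoordsTrivial Gs j ≠
        ((P : Subgroup H).map H.subtype) ⊓ firstCoordsTrivial Gs ((j : ℕ) + 1)} =
      {j : Fin r | ((Q : Subgroup H).map H.subtype) ⊓ firstCoordsTrivial Gs j ≠
        ((Q : Subgroup H).map H.subtype) ⊓ firstCoordsTrivial Gs ((j : ℕ) + 1)} := by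
  have : Fact p.Prime := ⟨hp⟩
  obtain ⟨g, hg⟩ := Sylow.exists_map_subtype_eq_conj_smul P Q
  rw [hg]
  ext j
  exact (Subgroup.conj_smul_inf_eq_iff g _ _ _).not.symm
end

section
/- Let G be a finite supersolvable group. Then G has a chief series with weakly decreasing indices: there exist k and a chain of subgroups 1 = N_0 ≤ N_1 ≤ ⋯ ≤ N_k = G, each normal in G, such that each index [N_{i+1} : N_i] is a prime number and [N_1 : N_0] ≥ [N_2 : N_1] ≥ ⋯ ≥ [N_k : N_{k−1}]. -/
/-!
Let `p` be the largest prime dividing `|G|`. Then `G` has a normal subgroup `P` of order `p`.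
Indeed, take a nontrivial cyclic normal subgroup `H` (the first nontrivial term of a cyclic
series). If `p ∣ |H|`, the subgroup of order `p` of `H` is characteristic in `H`, hence normal
in `G`. Otherwise, by induction `G ⧸ H` has a normal subgroup of order `p`, whose preimage `K`
has order `|H| * p`. All prime factors of `|H|` are smaller than `p`, so `p ∤ φ(|H|) = |Aut H|`:
an element of order `p` of `K` centralizes `H`, hence `K` is cyclic, and we conclude as before.

Now `G ⧸ P` is supersolvable of smaller order and its prime indices divide `|G|`, hence are at
most `p`; prepending `P` to the preimage of a decreasing series of `G ⧸ P` gives one of `G`.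
-/

open Subgroup

theorem Nat.coprime_totient_of_forall_lt {p m : ℕ} (hp : p.Prime)
    (h : ∀ q, q.Prime → q ∣ m → q < p) : p.Coprime m.totient := by
  rcases eq_or_ne m 0 with rfl | hm
  · exact absurd (h p hp (dvd_zero p)) (lt_irrefl p)
  rw [totient_eq_prod_factorization hm, Finsupp.prod, support_factorization]
  refine Coprime.prod_right fun q hq => ?_
  have hq' : q.Prime := prime_of_mem_primeFactors hq
  have hqp : q < p := h q hq' (dvd_of_mem_primeFactors hq)
  have hq2 := hq'.two_le
  exact (((coprime_primes hp hq').2 hqp.ne').pow_right _).mul_right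
    (coprime_of_lt_prime (by omega) (by omega) hp)

theorem Nat.exists_greatest_prime_dvd {n : ℕ} (hn : 1 < n) :
    ∃ p, p.Prime ∧ p ∣ n ∧ ∀ q, q.Prime → q ∣ n → q ≤ p := by
  obtain ⟨p, hp, hmax⟩ := n.primeFactors.exists_max_image id (nonempty_primeFactors.2 hn)
  exact ⟨p, prime_of_mem_primeFactors hp, dvd_of_mem_primeFactors hp,
    fun q hq hqn => hmax q (mem_primeFactors.2 ⟨hq, hqn, by omega⟩)⟩

theorem Fin.exists_castSucc_eq_and_succ_ne {α : Type*} {n : ℕ} (f : Fin (n + 1) → α) {a : α}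
    (h0 : f 0 = a) (hlast : f (Fin.last n) ≠ a) :
    ∃ i : Fin n, f i.castSucc = a ∧ f i.succ ≠ a := by
  by_contra! h
  exact hlast (Fin.induction h0 (fun i hi => h i hi) (Fin.last n))

section

variable {G : Type*} [Group G]

theorem Subgroup.characteristic_of_isCyclic [IsCyclic G] (K : Subgroup G) :
    K.Characteristic := by
  refine characteristic_iff_map_le.2 fun ϕ => ?_
  obtain ⟨n, hn⟩ := ϕ.toMonoidHom.map_cyclic
  rintro _ ⟨g, hg, rfl⟩
  rw [hn]
  exact zpow_mem hg n

theorem Subgroup.Normal.exists_normal_card_eq_prime_of_isCyclic {H : Subgroup G} (hH : H.Normal)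
    [IsCyclic H] [Finite H] {p : ℕ} (hp : p.Prime) (hpH : p ∣ Nat.card H) :
    ∃ P : Subgroup G, P.Normal ∧ Nat.card P = p := by
  have := Fact.mk hp
  obtain ⟨a, ha⟩ := exists_prime_orderOf_dvd_card' p hpH
  have := characteristic_of_isCyclic (zpowers a)
  refine ⟨(zpowers a).map H.subtype, inferInstance, ?_⟩
  rw [card_map_of_injective H.subtype_injective, Nat.card_zpowers, ha]

theorem Subgroup.commute_of_coprime_totient {H : Subgroup G} [H.Normal] [IsCyclic H] [Finite H]
    {g : G} (hg : (orderOf g).Coprime (Nat.card H).totient) {h : G} (hh : h ∈ H) :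
    Commute g h := by
  have hconj : MulAut.conjNormal (H := H) g = 1 := by
    rw [← orderOf_eq_one_iff]
    refine Nat.eq_one_of_dvd_coprimes hg (orderOf_map_dvd _ g) ?_
    rw [← IsCyclic.card_mulAut (G := H)]
    exact _root_.orderOf_dvd_natCard (MulAut.conjNormal (H := H) g)
  have := congrArg (fun σ : MulAut H => ((σ ⟨h, hh⟩ : H) : G)) hconj
  simp only [MulAut.conjNormal_apply, MulAut.one_apply] at this
  exact mul_inv_eq_iff_eq_mul.1 this

theorem isCyclic_of_card_eq_mul_prime [Finite G] {H : Subgroup G} [H.Normal] [IsCyclic H]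
    {p : ℕ} (hp : p.Prime) (hG : Nat.card G = Nat.card H * p) (hpH : p.Coprime (Nat.card H))
    (hpφ : p.Coprime (Nat.card H).totient) : IsCyclic G := by
  have := Fact.mk hp
  obtain ⟨x, hx⟩ := exists_prime_orderOf_dvd_card' (G := G) p (hG ▸ dvd_mul_left _ _)
  obtain ⟨h, hh⟩ := IsCyclic.exists_ofOrder_eq_natCard (α := H)
  rw [← orderOf_coe] at hh
  have hxh : Commute x h := commute_of_coprime_totient (by rwa [hx]) h.2
  refine isCyclic_of_orderOf_eq_card (x * h) ?_
  rw [hxh.orderOf_mul_eq_mul_orderOf_of_coprime (by rwa [hx, hh]), hx, hh, hG, mul_comm]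

theorem Subgroup.isCyclic_quotient_map {G' : Type*} [Group G'] (f : G →* G') {A B : Subgroup G}
    [(B.subgroupOf A).Normal] [((B.map f).subgroupOf (A.map f)).Normal]
    [IsCyclic (A ⧸ B.subgroupOf A)] :
    IsCyclic (A.map f ⧸ (B.map f).subgroupOf (A.map f)) :=
  isCyclic_of_surjective _ <| QuotientGroup.map_surjective_of_surjective (B.subgroupOf A)
    ((B.map f).subgroupOf (A.map f)) (f.subgroupMap A)
    ((QuotientGroup.mk'_surjective _).comp (f.subgroupMap_surjective A))
    fun _ hx => mem_map_of_mem f hx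

namespace IsSupersolvable

theorem quotient (hG : IsSupersolvable G) (H : Subgroup G) [H.Normal] :
    IsSupersolvable (G ⧸ H) := by
  obtain ⟨n, N, h0, hlast, hle, hN, hcyc⟩ := hG
  have hsurj := QuotientGroup.mk'_surjective H
  refine ⟨n, fun i => (N i).map (QuotientGroup.mk' H), by simp [h0],
    by simp [hlast, map_top_of_surjective _ hsurj], fun i => map_mono (hle i),
    fun i => (hN i).map _ hsurj, fun i => ?_⟩
  have := (hN i.castSucc).subgroupOf (N i.succ)
  have := (hN i.castSucc).map _ hsurj
  have := hcyc i
  exact isCyclic_quotient_map _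

theorem exists_normal_isCyclic_ne_bot [Nontrivial G] (hG : IsSupersolvable G) :
    ∃ H : Subgroup G, H.Normal ∧ IsCyclic H ∧ H ≠ ⊥ := by
  obtain ⟨n, N, h0, hlast, -, hN, hcyc⟩ := hG
  obtain ⟨i, hi0, hi⟩ := Fin.exists_castSucc_eq_and_succ_ne N h0 (hlast ▸ top_ne_bot)
  have := (hN i.castSucc).subgroupOf (N i.succ)
  have := hcyc i
  refine ⟨N i.succ, hN _,
    isCyclic_of_injective (QuotientGroup.mk' ((N i.castSucc).subgroupOf (N i.succ))) ?_, hi⟩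
  rw [← MonoidHom.ker_eq_bot_iff, QuotientGroup.ker_mk', hi0, bot_subgroupOf]

theorem exists_normal_card_eq_prime [Finite G] (hG : IsSupersolvable G) {p : ℕ} (hp : p.Prime)
    (hpG : p ∣ Nat.card G) (hmax : ∀ q, q.Prime → q ∣ Nat.card G → q ≤ p) :
    ∃ P : Subgroup G, P.Normal ∧ Nat.card P = p := by
  induction hn : Nat.card G using Nat.strong_induction_on generalizing G with
  | _ n ih =>
  subst hn
  have : Nontrivial G :=
    Finite.one_lt_card_iff_nontrivial.1 (hp.one_lt.trans_le (Nat.le_of_dvd Nat.card_pos hpG))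
  obtain ⟨H, hHn, hHc, hH⟩ := hG.exists_normal_isCyclic_ne_bot
  by_cases hpH : p ∣ Nat.card H
  · exact hHn.exists_normal_card_eq_prime_of_isCyclic hp hpH
  have hcard : Nat.card G = Nat.card (G ⧸ H) * Nat.card H :=
    card_eq_card_quotient_mul_card_subgroup H
  have hpQ : p ∣ Nat.card (G ⧸ H) := (hp.dvd_mul.1 (hcard ▸ hpG)).resolve_right hpH
  have hQG : Nat.card (G ⧸ H) ∣ Nat.card G := ⟨_, hcard⟩
  have hQlt : Nat.card (G ⧸ H) < Nat.card G := by
    rw [hcard]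
    exact lt_mul_of_one_lt_right Nat.card_pos ((one_lt_card_iff_ne_bot H).2 hH)
  obtain ⟨K', hK'n, hK'⟩ := ih _ hQlt (hG.quotient H) hpQ
    (fun q hq hqQ => hmax q hq (hqQ.trans hQG)) rfl
  set K := K'.comap (QuotientGroup.mk' H)
  have hHK : H ≤ K := fun h hh => by simp [K, (QuotientGroup.eq_one_iff h).2 hh]
  have hK : Nat.card K = Nat.card H * p := hK' ▸ QuotientGroup.card_preimage_mk H K'
  have hφ : p.Coprime (Nat.card H).totient := Nat.coprime_totient_of_forall_lt hp fun q hq hqH =>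
    (hmax q hq (hqH.trans (card_subgroup_dvd_card H))).lt_of_ne (by rintro rfl; exact hpH hqH)
  have : IsCyclic K := by
    have e := subgroupOfEquivOfLe hHK
    have : IsCyclic (H.subgroupOf K) := e.symm.isCyclic.1 hHc
    have hHK_card : Nat.card (H.subgroupOf K) = Nat.card H := Nat.card_congr e.toEquiv
    refine isCyclic_of_card_eq_mul_prime (H := H.subgroupOf K) hp ?_ ?_ ?_ <;> rw [hHK_card]
    exacts [hK, (Nat.Prime.coprime_iff_not_dvd hp).2 hpH, hφ]
  exact (hK'n.comap _).exists_normal_card_eq_prime_of_isCyclic hp (hK ▸ dvd_mul_left _ _)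

end IsSupersolvable

structure IsDecreasingPrimeChiefSeries {k : ℕ} (N : Fin (k + 1) → Subgroup G) : Prop where
  zero_eq_bot : N 0 = ⊥
  last_eq_top : N (Fin.last k) = ⊤
  castSucc_le_succ : ∀ i : Fin k, N i.castSucc ≤ N i.succ
  normal : ∀ i : Fin (k + 1), (N i).Normal
  prime_relIndex : ∀ i : Fin k, ((N i.castSucc).relIndex (N i.succ)).Prime
  relIndex_le_of_le : ∀ i j : Fin k, i ≤ j →
    (N j.castSucc).relIndex (N j.succ) ≤ (N i.castSucc).relIndex (N i.succ)

theorem IsDecreasingPrimeChiefSeries.cons_comap {P : Subgroup G} [P.Normal]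
    (hP : (Nat.card P).Prime) {k : ℕ} {M : Fin (k + 1) → Subgroup (G ⧸ P)}
    (hM : IsDecreasingPrimeChiefSeries M)
    (hle : ∀ i : Fin k, (M i.castSucc).relIndex (M i.succ) ≤ Nat.card P) :
    IsDecreasingPrimeChiefSeries
      (Fin.cons ⊥ fun i => (M i).comap (QuotientGroup.mk' P) : Fin (k + 2) → Subgroup G) := by
  set N : Fin (k + 2) → Subgroup G := Fin.cons ⊥ fun i => (M i).comap (QuotientGroup.mk' P)
  have hidx_zero : (N 0).relIndex (N 1) = Nat.card P := by
    simp [N, hM.zero_eq_bot, relIndex_bot_left]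
  have hidx_succ : ∀ i : Fin k, (N i.succ.castSucc).relIndex (N i.succ.succ) =
      (M i.castSucc).relIndex (M i.succ) := by
    simp [N, relIndex_comap,
      map_comap_eq_self_of_surjective (QuotientGroup.mk'_surjective P)]
  refine ⟨rfl, ?_, fun i => ?_, fun i => ?_, fun i => ?_, fun i j hij => ?_⟩
  · simp [N, ← Fin.succ_last, hM.last_eq_top]
  · cases i using Fin.cases with
    | zero => exact bot_le
    | succ i => simpa [N, ← Fin.succ_castSucc] using comap_mono (hM.castSucc_le_succ i)
  · cases i using Fin.cases with
    | zero => exact normal_bot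
    | succ i => simpa [N] using (hM.normal i).comap _
  · cases i using Fin.cases with
    | zero => rwa [← hidx_zero] at hP
    | succ i => rw [hidx_succ]; exact hM.prime_relIndex i
  · cases j using Fin.cases with
    | zero => rw [Fin.le_zero_iff.1 hij]
    | succ j =>
      cases i using Fin.cases with
      | zero => rw [hidx_succ]; exact hidx_zero ▸ hle j
      | succ i =>
        rw [hidx_succ, hidx_succ]
        exact hM.relIndex_le_of_le i j (Fin.succ_le_succ_iff.1 hij)

theorem IsSupersolvable.exists_isDecreasingPrimeChiefSeries [Finite G] (hG : IsSupersolvable G) :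
    ∃ (k : ℕ) (N : Fin (k + 1) → Subgroup G), IsDecreasingPrimeChiefSeries N := by
  induction hn : Nat.card G using Nat.strong_induction_on generalizing G with
  | _ n ih =>
  subst hn
  rcases subsingleton_or_nontrivial G with _ | _
  · exact ⟨0, fun _ => ⊥, ⟨rfl, Subsingleton.elim _ _, nofun, fun _ => normal_bot, nofun, nofun⟩⟩
  obtain ⟨p, hp, hpG, hmax⟩ := Nat.exists_greatest_prime_dvd (Finite.one_lt_card (α := G))
  obtain ⟨P, hPn, hP⟩ := hG.exists_normal_card_eq_prime hp hpG hmax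
  have hcard : Nat.card G = Nat.card (G ⧸ P) * p := hP ▸ card_eq_card_quotient_mul_card_subgroup P
  obtain ⟨k, M, hM⟩ := ih _ (by rw [hcard]; exact lt_mul_of_one_lt_right Nat.card_pos hp.one_lt)
    (hG.quotient P) rfl
  refine ⟨k + 1, _, hM.cons_comap (hP ▸ hp) fun i => hP ▸ hmax _ (hM.prime_relIndex i) ?_⟩
  exact (relIndex_dvd_card _ _).trans ((card_subgroup_dvd_card _).trans ⟨p, hcard⟩)

end

/-- (Zappa) A finite supersolvable group has a chief series with weakly decreasing
prime indices. -/
theorem exists_chief_series_decreasing_indices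
    (G : Type*) [Group G] [Finite G] (hss : IsSupersolvable G) :
    ∃ (kk : ℕ) (N : Fin (kk + 1) → Subgroup G),
      N 0 = ⊥ ∧ N (Fin.last kk) = ⊤ ∧
      (∀ i : Fin kk, N i.castSucc ≤ N i.succ) ∧
      (∀ i : Fin (kk + 1), (N i).Normal) ∧
      (∀ i : Fin kk, ((N i.castSucc).relIndex (N i.succ)).Prime) ∧
      ∀ i j : Fin kk, i ≤ j →
        (N j.castSucc).relIndex (N j.succ) ≤ (N i.castSucc).relIndex (N i.succ) := by
  obtain ⟨k, N, hN⟩ := hss.exists_isDecreasingPrimeChiefSeries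
  exact ⟨k, N, hN.zero_eq_bot, hN.last_eq_top, hN.castSucc_le_succ, hN.normal, hN.prime_relIndex,
    hN.relIndex_le_of_le⟩
end
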